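/- arXiv:1012.4078 — 11 statements merged into one kernel-verified Lean document; each statement's English description precedes it below -/
import Mathlib

section
/- Let U be a nonnegative random variable stochastically lower bounded by a uniform distribution on [0,1], i.e., P(U ≤ u) ≤ u for all u ∈ [0,1]. Let g : [0,∞) → [0,∞) be a non-increasing function and set V = g(U). Then E[1{U ≤ V}/V] ≤ 1, with the convention 0/0 = 0. -/
/-!
Let `s` be the supremum of the points `x > 0` with `x ≤ g x`. Since `g` is non-increasing, every
`u > 0` with `u ≤ g u` satisfies `u ≤ s ≤ g u`, so the integrand is at most `s⁻¹ · 1{U ≤ s}`, whose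
expectation is `P(U ≤ s) / s ≤ 1`. The event `U = 0`, where this bound fails, is null because
`P(U ≤ 0) ≤ 0`.
-/

open MeasureTheory Set

/-- For non-increasing `g`, where the graph of `g` crosses the diagonal; `0` (as `sSup ∅`) when no
`x > 0` has `x ≤ g x`. -/
noncomputable def diagonalCrossing (g : ℝ → ℝ) : ℝ :=
  sSup {x | 0 < x ∧ x ≤ g x}

section diagonalCrossing

variable {g : ℝ → ℝ} {x : ℝ}

lemma diagonalCrossing_nonneg (g : ℝ → ℝ) : 0 ≤ diagonalCrossing g :=
  Real.sSup_nonneg fun _ hy => hy.1.le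

lemma mem_upperBounds_of_le_self (hg : AntitoneOn g (Ioi 0)) (hx : 0 < x) (hxg : x ≤ g x) :
    g x ∈ upperBounds {y | 0 < y ∧ y ≤ g y} := by
  rintro y ⟨hy, hyg⟩
  rcases le_total y x with hyx | hxy
  · exact hyx.trans hxg
  · exact hyg.trans (hg hx (hx.trans_le hxy) hxy)

lemma le_diagonalCrossing (hg : AntitoneOn g (Ioi 0)) (hx : 0 < x) (hxg : x ≤ g x) :
    x ≤ diagonalCrossing g :=
  le_csSup ⟨g x, mem_upperBounds_of_le_self hg hx hxg⟩ ⟨hx, hxg⟩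

lemma diagonalCrossing_le (hg : AntitoneOn g (Ioi 0)) (hx : 0 < x) (hxg : x ≤ g x) :
    diagonalCrossing g ≤ g x :=
  csSup_le ⟨x, hx, hxg⟩ (mem_upperBounds_of_le_self hg hx hxg)

lemma ite_inv_le_indicator_diagonalCrossing (hg : AntitoneOn g (Ioi 0)) (hx : 0 < x) :
    (if x ≤ g x then (g x)⁻¹ else 0) ≤
      (Iic (diagonalCrossing g)).indicator (fun _ => (diagonalCrossing g)⁻¹) x := by
  split_ifs with hxg
  · have hs : x ≤ diagonalCrossing g := le_diagonalCrossing hg hx hxg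
    rw [indicator_of_mem (mem_Iic.2 hs)]
    exact inv_anti₀ (hx.trans_le hs) (diagonalCrossing_le hg hx hxg)
  · exact indicator_nonneg (fun _ _ => inv_nonneg.2 (diagonalCrossing_nonneg g)) x

lemma ite_inv_nonneg (hx : 0 < x) : 0 ≤ if x ≤ g x then (g x)⁻¹ else 0 := by
  split_ifs with hxg
  · exact inv_nonneg.2 (hx.le.trans hxg)
  · exact le_rfl

end diagonalCrossing

section superUniform

variable {Ω : Type*} [MeasurableSpace Ω] {μ : Measure Ω} {U : Ω → ℝ}

lemma measureReal_le_le_self [IsZeroOrProbabilityMeasure μ]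
    (hU : ∀ u ∈ Icc (0 : ℝ) 1, μ.real {ω | U ω ≤ u} ≤ u) {s : ℝ} (hs : 0 ≤ s) :
    μ.real {ω | U ω ≤ s} ≤ s := by
  rcases le_total s 1 with hs1 | hs1
  · exact hU s ⟨hs, hs1⟩
  · exact measureReal_le_one.trans hs1

lemma ae_pos_of_measureReal_le_nonpos [IsFiniteMeasure μ] (hU : μ.real {ω | U ω ≤ 0} ≤ 0) :
    ∀ᵐ ω ∂μ, 0 < U ω := by
  rw [ae_iff]
  simpa only [not_lt] using ((measureReal_eq_zero_iff (measure_ne_top _ _)).1 (hU.antisymm measureReal_nonneg))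

lemma integral_indicator_le_one [IsZeroOrProbabilityMeasure μ] (hUmeas : Measurable U)
    (hU : ∀ u ∈ Icc (0 : ℝ) 1, μ.real {ω | U ω ≤ u} ≤ u) {s : ℝ} (hs : 0 ≤ s) :
    ∫ ω, {ω | U ω ≤ s}.indicator (fun _ => s⁻¹) ω ∂μ ≤ 1 := by
  have hmeas : MeasurableSet {ω | U ω ≤ s} := hUmeas measurableSet_Iic
  rw [integral_indicator_const _ hmeas, smul_eq_mul]
  calc μ.real {ω | U ω ≤ s} * s⁻¹ ≤ s * s⁻¹ := by
        gcongr
        exact measureReal_le_le_self hU hs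
    _ ≤ 1 := mul_inv_le_one

end superUniform

theorem stmt1_general {Ω : Type*} [MeasurableSpace Ω] (μ : Measure Ω) [IsProbabilityMeasure μ]
    (U : Ω → ℝ) (hUmeas : Measurable U)
    (hU : ∀ u ∈ Set.Icc (0:ℝ) 1, (μ {ω | U ω ≤ u}).toReal ≤ u)
    (g : ℝ → ℝ)
    (hganti : ∀ x y, 0 ≤ x → x ≤ y → g y ≤ g x) :
    ∫ ω, (if U ω ≤ g (U ω) then (g (U ω))⁻¹ else 0) ∂μ ≤ 1 := by
  have hg : AntitoneOn g (Ioi 0) := fun x hx y _ hxy => hganti x y hx.le hxy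
  set s := diagonalCrossing g
  have hUpos : ∀ᵐ ω ∂μ, 0 < U ω := ae_pos_of_measureReal_le_nonpos (hU 0 ⟨le_rfl, zero_le_one⟩)
  refine (integral_mono_of_nonneg ?_ ((integrable_const s⁻¹).indicator
    (hUmeas measurableSet_Iic)) ?_).trans (integral_indicator_le_one hUmeas hU
    (diagonalCrossing_nonneg g))
  · filter_upwards [hUpos] with ω hω using ite_inv_nonneg hω
  · filter_upwards [hUpos] with ω hω using ite_inv_le_indicator_diagonalCrossing hg hω

theorem stmt1 {Ω : Type*} [MeasurableSpace Ω] (μ : Measure Ω) [IsProbabilityMeasure μ]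
    (U : Ω → ℝ) (hUmeas : Measurable U) (hUpos : ∀ ω, 0 ≤ U ω)
    (hU : ∀ u ∈ Set.Icc (0:ℝ) 1, (μ {ω | U ω ≤ u}).toReal ≤ u)
    (g : ℝ → ℝ) (hgpos : ∀ x, 0 ≤ x → 0 ≤ g x)
    (hganti : ∀ x y, 0 ≤ x → x ≤ y → g y ≤ g x) :
    ∫ ω, (if U ω ≤ g (U ω) then (g (U ω))⁻¹ else 0) ∂μ ≤ 1 :=
  stmt1_general μ U hUmeas hU g hganti
end

section
/- Let p₁,…,p_m ∈ [0,1] and let Ĝ(u) = (1/m)·#{i : p_i ≤ u} be the empirical c.d.f. Then the set T = {u ∈ [0,1] : Ĝ(u) ≥ u/α} (for α ∈ (0,1)) contains 0, and its supremum t* = max T is attained and satisfies Ĝ(t*) = t*/α; moreover t* ∈ {αk/m : 0 ≤ k ≤ m}. -/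
/-!
Write `C u = #{i | p i ≤ u}` and `g k = α k / m`. Since `α > 0`, `u ∈ T` means `u ≤ g (C u)`.
Take the largest `K ≤ m` with `K ≤ C (g K)`. For `u ∈ T`, monotonicity of `C` gives
`C u ≤ C (g (C u))`, so `C u ≤ K` and `u ≤ g K`; applied to `u = g K` this also gives
`C (g K) ≤ K`, hence `C (g K) = K`, which is the crossing equality at `t* = g K`.
-/

open Finset

theorem Nat.exists_le_comp_eq_and_forall_le_of_monotone {β : Type*} [Preorder β] {C : β → ℕ}
    (hC : Monotone C) {m : ℕ} (hCm : ∀ u, C u ≤ m) {g : ℕ → β} (hg : Monotone g) :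
    ∃ K ≤ m, C (g K) = K ∧ ∀ u, u ≤ g (C u) → u ≤ g K := by
  classical
  set K := Nat.findGreatest (fun k => k ≤ C (g k)) m
  have hK : K ≤ C (g K) :=
    Nat.findGreatest_spec (P := fun k => k ≤ C (g k)) (zero_le m) (zero_le _)
  have le_K : ∀ u, u ≤ g (C u) → C u ≤ K := fun u hu =>
    Nat.le_findGreatest (hCm u) (hC hu)
  refine ⟨K, Nat.findGreatest_le m, le_antisymm (le_K _ (hg hK)) hK, fun u hu => ?_⟩
  exact hu.trans (hg (le_K u hu))

theorem monotone_card_filter_le {ι : Type*} [Fintype ι] (p : ι → ℝ) :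
    Monotone fun u => #{i | p i ≤ u} := fun _ _ huv =>
  card_le_card <| monotone_filter_right _ fun _ _ hi => hi.trans huv

theorem stmt3_general (m : ℕ) (α : ℝ) (hα : α ∈ Set.Ioo (0:ℝ) 1)
    (p : Fin m → ℝ) :
    (0:ℝ) ∈ {u ∈ Set.Icc (0:ℝ) 1 |
        u / α ≤ ((Finset.univ.filter (fun i => p i ≤ u)).card : ℝ) / m} ∧
    ∃ t ∈ {u ∈ Set.Icc (0:ℝ) 1 |
        u / α ≤ ((Finset.univ.filter (fun i => p i ≤ u)).card : ℝ) / m},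
      (∀ u ∈ {u ∈ Set.Icc (0:ℝ) 1 |
          u / α ≤ ((Finset.univ.filter (fun i => p i ≤ u)).card : ℝ) / m}, u ≤ t) ∧
      ((Finset.univ.filter (fun i => p i ≤ t)).card : ℝ) / m = t / α ∧
      ∃ k ≤ m, t = α * k / m := by
  obtain ⟨hα0, hα1⟩ := hα
  set C : ℝ → ℕ := fun u => #{i | p i ≤ u}
  set g : ℕ → ℝ := fun k => α * k / m
  have hg : Monotone g := fun _ _ hkl => by simp only [g]; gcongr
  have hT : ∀ u, u / α ≤ (C u : ℝ) / m ↔ u ≤ g (C u) := fun u => by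
    rw [div_le_iff₀' hα0, ← mul_div_assoc]
  obtain ⟨K, hKm, hCK, hmax⟩ := Nat.exists_le_comp_eq_and_forall_le_of_monotone (C := C)
    (monotone_card_filter_le p) (fun _ => (card_le_univ _).trans_eq (Fintype.card_fin m)) hg
  have hgK : g K / α = K / m := by
    simp only [g]
    rw [mul_div_assoc, mul_div_cancel_left₀ _ hα0.ne']
  have hgK_mem : g K ∈ Set.Icc (0:ℝ) 1 :=
    ⟨by positivity, by
      simpa only [g, mul_div_assoc] using mul_le_one₀ hα1.le (by positivity)
        (div_le_one_of_le₀ (by exact_mod_cast hKm) m.cast_nonneg)⟩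
  refine ⟨⟨⟨le_rfl, zero_le_one⟩, by rw [zero_div]; positivity⟩, g K,
    ⟨hgK_mem, (hT _).2 (by rw [hCK])⟩, fun u hu => hmax u ((hT u).1 hu.2), ?_, K, hKm, rfl⟩
  change (C (g K) : ℝ) / m = g K / α
  rw [hCK, hgK]

theorem stmt3 (m : ℕ) (hm : 1 ≤ m) (α : ℝ) (hα : α ∈ Set.Ioo (0:ℝ) 1)
    (p : Fin m → ℝ) (hp : ∀ i, p i ∈ Set.Icc (0:ℝ) 1) :
    (0:ℝ) ∈ {u ∈ Set.Icc (0:ℝ) 1 |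
        u / α ≤ ((Finset.univ.filter (fun i => p i ≤ u)).card : ℝ) / m} ∧
    ∃ t ∈ {u ∈ Set.Icc (0:ℝ) 1 |
        u / α ≤ ((Finset.univ.filter (fun i => p i ≤ u)).card : ℝ) / m},
      (∀ u ∈ {u ∈ Set.Icc (0:ℝ) 1 |
          u / α ≤ ((Finset.univ.filter (fun i => p i ≤ u)).card : ℝ) / m}, u ≤ t) ∧
      ((Finset.univ.filter (fun i => p i ≤ t)).card : ℝ) / m = t / α ∧
      ∃ k ≤ m, t = α * k / m :=
  stmt3_general m α hα p
end

section
/- Fix i ∈ {1,…,m} and let q ∈ [0,1]^m. Let q⁰ denote q with its i-th coordinate replaced by 0, and let t^su denote the Benjamini–Hochberg threshold. Then the events coincide: {q_i ≤ t^su(q⁰)} = {q_i ≤ t^su(q)}, and on this event t^su(q⁰) = t^su(q). -/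
/-- The Benjamini–Hochberg step-up threshold. -/
noncomputable def tsu (m : ℕ) (α : ℝ) (q : Fin m → ℝ) : ℝ :=
  sSup {u | u ∈ Set.Icc (0:ℝ) 1 ∧
    u / α ≤ ((Finset.univ.filter (fun i => q i ≤ u)).card : ℝ) / m}

/-! The threshold `t = tsu q` is itself admissible, and at `t` the step-up condition only sees the
set `{j | q j ≤ t}`; so `t` remains admissible, and `tsu q ≤ tsu q'`, for every `q'` with the same
coordinates below `t`. Moving the `i`-th coordinate between `0` and `q i` keeps that set as soon as
`q i` lies below the threshold, whichever of the two thresholds we start from. -/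

open Finset Function

section

variable {m : ℕ} {α : ℝ}

def tsuFeasible (m : ℕ) (α : ℝ) (q : Fin m → ℝ) : Set ℝ :=
  {u | u ∈ Set.Icc (0:ℝ) 1 ∧ u / α ≤ (#{j | q j ≤ u} : ℝ) / m}

theorem zero_mem_tsuFeasible (q : Fin m → ℝ) : 0 ∈ tsuFeasible m α q :=
  ⟨Set.left_mem_Icc.2 zero_le_one, by rw [zero_div]; positivity⟩

theorem tsuFeasible_nonempty (q : Fin m → ℝ) : (tsuFeasible m α q).Nonempty :=
  ⟨0, zero_mem_tsuFeasible q⟩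

theorem bddAbove_tsuFeasible (q : Fin m → ℝ) : BddAbove (tsuFeasible m α q) :=
  ⟨1, fun _ hu => hu.1.2⟩

theorem le_tsu {q : Fin m → ℝ} {u : ℝ} (hu : u ∈ tsuFeasible m α q) : u ≤ tsu m α q :=
  le_csSup (bddAbove_tsuFeasible q) hu

theorem tsu_nonneg (q : Fin m → ℝ) : 0 ≤ tsu m α q :=
  le_tsu (zero_mem_tsuFeasible q)

theorem card_filter_le_le_of_le (q : Fin m → ℝ) {u v : ℝ} (huv : u ≤ v) :
    #{j | q j ≤ u} ≤ #{j | q j ≤ v} :=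
  card_le_card (monotone_filter_right _ fun _ _ hj => hj.trans huv)

theorem tsu_mem_tsuFeasible (hα : 0 < α) (q : Fin m → ℝ) : tsu m α q ∈ tsuFeasible m α q := by
  set t := tsu m α q
  refine ⟨⟨tsu_nonneg q, csSup_le (tsuFeasible_nonempty q) fun _ hu => hu.1.2⟩, ?_⟩
  rw [div_le_iff₀ hα]
  refine csSup_le (tsuFeasible_nonempty q) fun u hu => (div_le_iff₀ hα).1 ?_
  have hcard : (#{j | q j ≤ u} : ℝ) ≤ #{j | q j ≤ t} :=
    mod_cast card_filter_le_le_of_le q (le_tsu hu)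
  exact hu.2.trans (by gcongr)

theorem tsu_le_tsu_of_forall_le_iff (hα : 0 < α) {q q' : Fin m → ℝ}
    (h : ∀ j, q j ≤ tsu m α q ↔ q' j ≤ tsu m α q) : tsu m α q ≤ tsu m α q' := by
  obtain ⟨hIcc, hstep⟩ := tsu_mem_tsuFeasible hα q
  refine le_tsu ⟨hIcc, ?_⟩
  rwa [filter_congr fun j _ => (h j).symm]

theorem tsu_le_tsu_update (hα : 0 < α) (q : Fin m → ℝ) (i : Fin m) {x : ℝ}
    (hqi : q i ≤ tsu m α q) (hx : x ≤ tsu m α q) : tsu m α q ≤ tsu m α (update q i x) := by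
  refine tsu_le_tsu_of_forall_le_iff hα fun j => ?_
  rcases eq_or_ne j i with rfl | hji
  · simp [hqi, hx]
  · rw [update_of_ne hji]

end

theorem stmt6_general (m : ℕ) (α : ℝ) (hα : α ∈ Set.Ioo (0:ℝ) 1)
    (q : Fin m → ℝ) (i : Fin m) :
    (q i ≤ tsu m α (Function.update q i 0) ↔ q i ≤ tsu m α q) ∧
    (q i ≤ tsu m α q → tsu m α (Function.update q i 0) = tsu m α q) := by
  set q₀ := update q i 0
  have hq : update q₀ i (q i) = q := by simp [q₀]
  have hq₀_le : q i ≤ tsu m α q₀ → tsu m α q₀ ≤ tsu m α q := fun h =>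
    hq ▸ tsu_le_tsu_update hα.1 q₀ i (by simpa [q₀] using tsu_nonneg q₀) h
  have hle_q₀ : q i ≤ tsu m α q → tsu m α q ≤ tsu m α q₀ := fun h =>
    tsu_le_tsu_update hα.1 q i h (tsu_nonneg q)
  have hiff : q i ≤ tsu m α q₀ ↔ q i ≤ tsu m α q :=
    ⟨fun h => h.trans (hq₀_le h), fun h => h.trans (hle_q₀ h)⟩
  exact ⟨hiff, fun h => (hq₀_le (hiff.2 h)).antisymm (hle_q₀ h)⟩

theorem stmt6 (m : ℕ) (hm : 1 ≤ m) (α : ℝ) (hα : α ∈ Set.Ioo (0:ℝ) 1)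
    (q : Fin m → ℝ) (hq : ∀ i, q i ∈ Set.Icc (0:ℝ) 1) (i : Fin m) :
    (q i ≤ tsu m α (Function.update q i 0) ↔ q i ≤ tsu m α q) ∧
    (q i ≤ tsu m α q → tsu m α (Function.update q i 0) = tsu m α q) :=
  stmt6_general m α hα q i
end

section
/- Let p₁,…,p_m be random variables in [0,1] with a subset H₀ ⊆ {1,…,m} such that P(p_i ≤ u) ≤ u for all u ∈ [0,1] and i ∈ H₀. For k ∈ {1,…,m}, let R = {i : p_i ≤ min(αk/m, 1)} be the k-FWER Bonferroni procedure. Then P(|R ∩ H₀| ≥ k) ≤ α. -/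
open MeasureTheory

/-!
With `t = min (αk/m) 1`, the number of rejected true nulls has expectation
`∑ i ∈ H₀, P(p i ≤ t) ≤ |H₀| · αk/m ≤ αk`, so Markov's inequality at
level `k` bounds the probability that it reaches `k` by `α`.
-/

theorem mul_measureReal_le_card_filter_le_sum {Ω ι : Type*} [MeasurableSpace Ω]
    (μ : Measure Ω) [IsFiniteMeasure μ] (s : Finset ι) (A : ι → Set Ω)
    [∀ i, DecidablePred (· ∈ A i)] (hA : ∀ i, MeasurableSet (A i)) (k : ℕ) :
    k * μ.real {ω | k ≤ (s.filter (fun i => ω ∈ A i)).card} ≤ ∑ i ∈ s, μ.real (A i) := by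
  have hcount : ∀ ω, ((s.filter (fun i => ω ∈ A i)).card : ℝ)
      = ∑ i ∈ s, (A i).indicator 1 ω := by
    intro ω
    simp only [Finset.natCast_card_filter, Set.indicator_apply, Pi.one_apply]
  have hint : Integrable (fun ω => ∑ i ∈ s, (A i).indicator (1 : Ω → ℝ) ω) μ :=
    integrable_finsetSum _ fun i _ => (integrable_const 1).indicator (hA i)
  calc (k : ℝ) * μ.real {ω | k ≤ (s.filter (fun i => ω ∈ A i)).card}
      = k * μ.real {ω | (k : ℝ) ≤ ∑ i ∈ s, (A i).indicator 1 ω} := by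
        simp only [← hcount, Nat.cast_le]
    _ ≤ ∫ ω, ∑ i ∈ s, (A i).indicator (1 : Ω → ℝ) ω ∂μ :=
        mul_meas_ge_le_integral_of_nonneg
          (.of_forall fun ω => by rw [← hcount]; positivity) hint _
    _ = ∑ i ∈ s, μ.real (A i) := by
        rw [integral_finsetSum _ fun i _ => (integrable_const 1).indicator (hA i)]
        exact Finset.sum_congr rfl fun i _ => integral_indicator_one (hA i)

theorem stmt8_general {Ω : Type*} [MeasurableSpace Ω] (μ : Measure Ω) [IsProbabilityMeasure μ]
    (m : ℕ) (α : ℝ) (hα : α ∈ Set.Ioo (0:ℝ) 1)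
    (k : ℕ) (hk : 1 ≤ k) (hkm : k ≤ m)
    (p : Fin m → Ω → ℝ) (hmeas : ∀ i, Measurable (p i))
    (H₀ : Finset (Fin m))
    (hnull : ∀ i ∈ H₀, ∀ u ∈ Set.Icc (0:ℝ) 1, (μ {ω | p i ω ≤ u}).toReal ≤ u) :
    (μ {ω | k ≤ ((Finset.univ.filter (fun i => p i ω ≤ min (α * k / m) 1)) ∩ H₀).card}).toReal
      ≤ α := by
  set t := min (α * k / m) 1
  have hm : (0 : ℝ) < m := by exact_mod_cast (show 0 < m by omega)
  have ht : t ∈ Set.Icc (0 : ℝ) 1 :=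
    ⟨le_min (by have := hα.1; positivity) zero_le_one, min_le_right _ _⟩
  have hmarkov := mul_measureReal_le_card_filter_le_sum μ H₀ (fun i => {ω | p i ω ≤ t})
    (fun i => measurableSet_le (hmeas i) measurable_const) k
  have hsum : ∑ i ∈ H₀, μ.real {ω | p i ω ≤ t} ≤ α * k :=
    calc ∑ i ∈ H₀, μ.real {ω | p i ω ≤ t}
        ≤ ∑ _i ∈ H₀, t := Finset.sum_le_sum fun i hi => hnull i hi t ht
      _ = H₀.card * t := by rw [Finset.sum_const, nsmul_eq_mul]
      _ ≤ m * (α * k / m) := by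
          gcongr
          · exact ht.1
          · simpa using H₀.card_le_univ
          · exact min_le_left _ _
      _ = α * k := by field_simp
  simp only [Finset.filter_inter, Finset.univ_inter]
  exact le_of_mul_le_mul_left (hmarkov.trans (hsum.trans_eq (mul_comm _ _)))
    (by exact_mod_cast hk)

theorem stmt8 {Ω : Type*} [MeasurableSpace Ω] (μ : Measure Ω) [IsProbabilityMeasure μ]
    (m : ℕ) (hm : 2 ≤ m) (α : ℝ) (hα : α ∈ Set.Ioo (0:ℝ) 1)
    (k : ℕ) (hk : 1 ≤ k) (hkm : k ≤ m)
    (p : Fin m → Ω → ℝ) (hmeas : ∀ i, Measurable (p i))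
    (hval : ∀ i ω, p i ω ∈ Set.Icc (0:ℝ) 1)
    (H₀ : Finset (Fin m))
    (hnull : ∀ i ∈ H₀, ∀ u ∈ Set.Icc (0:ℝ) 1, (μ {ω | p i ω ≤ u}).toReal ≤ u) :
    (μ {ω | k ≤ ((Finset.univ.filter (fun i => p i ω ≤ min (α * k / m) 1)) ∩ H₀).card}).toReal
      ≤ α :=
  stmt8_general μ m α hα k hk hkm p hmeas H₀ hnull
end

section
/- Let R : [0,1]^m → 2^{1,…,m} be a thresholding procedure R_t(p) = {i : p_i ≤ t(p)} with t(p) ∈ T(p) = {u ∈ [0,1] : Ĝ(p,u) ≥ u/α} (self-consistency) and t coordinate-wise non-increasing. Assume the p-value family is weak PRDS on H₀(P) and each null p-value satisfies P(p_i ≤ u) ≤ u. Then FDR(R_t, P) = E[|R_t ∩ H₀|/(|R_t| ∨ 1)] ≤ α·m₀/m ≤ α, where m₀ = |H₀(P)|. -/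
/-!
Fix a null `i`, let `N` be the number of rejections and `c = α / m`. Self-consistency gives
`t ≤ c N`, so `E[1{p_i ≤ t} / N] ≤ ∑ₖ k⁻¹ P(p_i ≤ c k, N = k)`. Put `g k = P(N ≤ k | p_i ≤ c k)`.
Since `N` is antitone in the p-values, `{N ≤ k - 1}` is an upper set, and weak PRDS gives
`P(N ≤ k - 1, p_i ≤ c k) ≥ g (k - 1) P(p_i ≤ c k)`. Together with `P(p_i ≤ c k) ≤ c k`, the k-th
term is at most `c (g k - g (k - 1))`, so the sum telescopes to at most `c`. Summing over the `m₀`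
nulls gives `α m₀ / m`.
-/

open MeasureTheory Finset

lemma card_inter_div_max_one_eq_sum {ι : Type*} [DecidableEq ι] (S H : Finset ι) :
    (#(S ∩ H) : ℝ) / max (#S : ℝ) 1 = ∑ i ∈ H, if i ∈ S then (#S : ℝ)⁻¹ else 0 := by
  rw [← sum_filter, sum_const, nsmul_eq_mul, filter_mem_eq_inter, inter_comm]
  rcases S.eq_empty_or_nonempty with rfl | hS
  · simp
  · rw [max_eq_left (by exact_mod_cast hS.card_pos), div_eq_mul_inv]

section Telescoping

variable {Ω : Type*} [MeasurableSpace Ω] {μ : Measure Ω}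

lemma measureReal_inter_div_le_of_pos_imp {D s s' : Set Ω}
    (h : 0 < μ s → μ (D ∩ s) / μ s ≤ μ (D ∩ s') / μ s') :
    μ.real (D ∩ s) / μ.real s ≤ μ.real (D ∩ s') / μ.real s' := by
  have hle : μ (D ∩ s) / μ s ≤ μ (D ∩ s') / μ s' := by
    rcases eq_zero_or_pos (μ s) with h0 | hpos
    · rw [h0, measure_mono_null Set.inter_subset_right h0, ENNReal.zero_div]
      exact zero_le
    · exact h hpos
  have hfin : μ (D ∩ s') / μ s' ≠ ⊤ :=
    ne_top_of_le_ne_top ENNReal.one_ne_top <|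
      ENNReal.div_le_of_le_mul <| (one_mul (μ s')).symm ▸ measure_mono Set.inter_subset_right
  simpa only [Measure.real, ENNReal.toReal_div] using ENNReal.toReal_mono hfin hle

lemma measureReal_inter_sdiff_le [IsFiniteMeasure μ] {A A' B B' : Set Ω} (hA : A ⊆ A')
    (hB : B ⊆ B') (hBm : MeasurableSet B) {u : ℝ} (hA'u : μ.real A' ≤ u)
    (hcond : μ.real (B ∩ A) / μ.real A ≤ μ.real (B ∩ A') / μ.real A') :
    μ.real (A' ∩ (B' \ B)) ≤ u * (μ.real (B' ∩ A') / μ.real A' - μ.real (B ∩ A) / μ.real A) := by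
  set g := μ.real (B ∩ A) / μ.real A
  set g' := μ.real (B' ∩ A') / μ.real A'
  set a := μ.real A'
  have hcancel : ∀ C, μ.real (C ∩ A') / a * a = μ.real (C ∩ A') :=
    fun _ => div_mul_cancel_of_imp (measureReal_mono_null Set.inter_subset_right)
  have hlow : g * a ≤ μ.real (B ∩ A') :=
    (mul_le_mul_of_nonneg_right hcond measureReal_nonneg).trans_eq (hcancel B)
  have hup : μ.real (B ∩ A') ≤ g' * a :=
    (measureReal_mono (Set.inter_subset_inter_left _ hB)).trans_eq (hcancel B').symm
  have hdiff : μ.real (A' ∩ (B' \ B)) = g' * a - μ.real (B ∩ A') := by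
    have hsplit := measureReal_inter_add_sdiff (μ := μ) (s := B' ∩ A') hBm
    rw [Set.inter_right_comm, Set.inter_eq_right.2 hB] at hsplit
    have hset : A' ∩ (B' \ B) = (B' ∩ A') \ B := by
      ext ω; simp only [Set.mem_inter_iff, Set.mem_sdiff]; tauto
    rw [hset, show g' * a = _ from hcancel B', ← hsplit]
    ring
  have hg_mono : g ≤ g' := by
    rcases measureReal_nonneg.eq_or_lt with ha | ha
    · have : μ.real A = 0 := measureReal_mono_null hA ha.symm
      simp only [g, this, div_zero]
      positivity
    · exact le_of_mul_le_mul_right (hlow.trans hup) ha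
  calc μ.real (A' ∩ (B' \ B)) ≤ (g' - g) * a := by rw [hdiff]; linarith
    _ ≤ (g' - g) * u := mul_le_mul_of_nonneg_left hA'u (sub_nonneg.2 hg_mono)
    _ = u * (g' - g) := mul_comm _ _

lemma sum_inv_mul_measureReal_inter_sdiff_le [IsFiniteMeasure μ] {A B : ℕ → Set Ω}
    (hA : Monotone A) (hB : Monotone B) (hBm : ∀ k, MeasurableSet (B k)) {c : ℝ} (hc : 0 ≤ c)
    {n : ℕ} (hAc : ∀ k < n, μ.real (A (k + 1)) ≤ c * (k + 1))
    (hcond : ∀ k < n, μ.real (B k ∩ A k) / μ.real (A k) ≤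
      μ.real (B k ∩ A (k + 1)) / μ.real (A (k + 1))) :
    ∑ k ∈ range n, ((k : ℝ) + 1)⁻¹ * μ.real (A (k + 1) ∩ (B (k + 1) \ B k)) ≤ c := by
  set g : ℕ → ℝ := fun k => μ.real (B k ∩ A k) / μ.real (A k)
  calc ∑ k ∈ range n, ((k : ℝ) + 1)⁻¹ * μ.real (A (k + 1) ∩ (B (k + 1) \ B k))
      ≤ ∑ k ∈ range n, c * (g (k + 1) - g k) := by
        refine sum_le_sum fun k hk => ?_
        have hk := mem_range.1 hk
        rw [inv_mul_le_iff₀ (by positivity), ← mul_assoc, mul_comm _ c]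
        exact measureReal_inter_sdiff_le (hA k.le_succ) (hB k.le_succ) (hBm k) (hAc k hk)
          (hcond k hk)
    _ = c * (g n - g 0) := by rw [← mul_sum, sum_range_sub]
    _ ≤ c := by
        have hg_le_one : g n ≤ 1 :=
          div_le_one_of_le₀ (measureReal_mono Set.inter_subset_right) measureReal_nonneg
        have hg_nonneg : 0 ≤ g 0 := by positivity
        exact mul_le_of_le_one_right hc (by linarith)

end Telescoping

section Indicator

variable {Ω : Type*} {E : Set Ω} {N : Ω → ℕ} {n : ℕ}

lemma indicator_inv_natCast_eq_sum (hN : ∀ ω ∈ E, N ω ≤ n) :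
    E.indicator (fun ω => (N ω : ℝ)⁻¹) =
      ∑ k ∈ range (n + 1), (E ∩ {ω | N ω = k}).indicator fun _ => (k : ℝ)⁻¹ := by
  classical
  ext ω
  by_cases hω : ω ∈ E
  · simp [Set.indicator_apply, hω, Nat.lt_succ_of_le (hN ω hω)]
  · simp [hω]

variable [MeasurableSpace Ω] {μ : Measure Ω} [IsFiniteMeasure μ]

lemma measurableSet_inter_fiber (hE : MeasurableSet E) (hNm : Measurable N) (k : ℕ) :
    MeasurableSet (E ∩ {ω | N ω = k}) :=
  hE.inter (hNm (measurableSet_singleton k))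

lemma integrable_indicator_inv_natCast (hE : MeasurableSet E) (hNm : Measurable N)
    (hN : ∀ ω ∈ E, N ω ≤ n) : Integrable (E.indicator fun ω => (N ω : ℝ)⁻¹) μ := by
  rw [indicator_inv_natCast_eq_sum hN]
  exact integrable_finsetSum' _ fun k _ =>
    (integrable_const _).indicator (measurableSet_inter_fiber hE hNm k)

lemma integral_indicator_inv_natCast (hE : MeasurableSet E) (hNm : Measurable N)
    (hN : ∀ ω ∈ E, N ω ≤ n) :
    ∫ ω, E.indicator (fun ω => (N ω : ℝ)⁻¹) ω ∂μ =
      ∑ k ∈ range (n + 1), (k : ℝ)⁻¹ * μ.real (E ∩ {ω | N ω = k}) := by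
  simp_rw [indicator_inv_natCast_eq_sum hN, Finset.sum_apply]
  rw [integral_finsetSum _ fun k _ =>
    (integrable_const _).indicator (measurableSet_inter_fiber hE hNm k)]
  refine sum_congr rfl fun k _ => ?_
  rw [integral_indicator_const _ (measurableSet_inter_fiber hE hNm k), smul_eq_mul, mul_comm]

end Indicator

section Rejection

variable {ι Ω : Type*} [Fintype ι] [MeasurableSpace Ω]

noncomputable def rejectionSet (t : (ι → ℝ) → ℝ) (q : ι → ℝ) : Finset ι :=
  univ.filter fun i => q i ≤ t q

def IsWeakPRDSAt (μ : Measure Ω) (P : Ω → ι → ℝ) (i : ι) : Prop :=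
  ∀ D : Set (ι → ℝ), MeasurableSet D → IsUpperSet D →
    ∀ u v : ℝ, u ∈ Set.Icc (0 : ℝ) 1 → v ∈ Set.Icc (0 : ℝ) 1 → u ≤ v →
      0 < μ {ω | P ω i ≤ u} →
      μ ({ω | P ω ∈ D} ∩ {ω | P ω i ≤ u}) / μ {ω | P ω i ≤ u} ≤
        μ ({ω | P ω ∈ D} ∩ {ω | P ω i ≤ v}) / μ {ω | P ω i ≤ v}

variable {t : (ι → ℝ) → ℝ}

lemma rejectionSet_antitone (ht : Antitone t) : Antitone (rejectionSet t) := by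
  intro q q' hq i hi
  simp only [rejectionSet, mem_filter, mem_univ, true_and] at hi ⊢
  exact (hq i).trans (hi.trans (ht hq))

lemma isUpperSet_card_rejectionSet_le (ht : Antitone t) (k : ℕ) :
    IsUpperSet {q | #(rejectionSet t q) ≤ k} :=
  fun _ _ hq hk => (card_le_card (rejectionSet_antitone ht hq)).trans hk

lemma measurable_card_rejectionSet (ht : Measurable t) :
    Measurable fun q => #(rejectionSet t q) := by
  simp only [rejectionSet, card_filter]
  exact Finset.measurable_sum _ fun i _ =>
    Measurable.ite (measurableSet_le (measurable_pi_apply i) ht) measurable_const measurable_const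

lemma measurableSet_mem_rejectionSet {P : Ω → ι → ℝ} (hP : Measurable P) (ht : Measurable t)
    (i : ι) : MeasurableSet {ω | i ∈ rejectionSet t (P ω)} := by
  simp only [rejectionSet, mem_filter, mem_univ, true_and]
  exact measurableSet_le ((measurable_pi_apply i).comp hP) (ht.comp hP)

lemma le_div_mul_card_of_mem_rejectionSet {α n : ℝ} (hα : 0 < α) {q : ι → ℝ}
    (hsc : t q / α ≤ #(rejectionSet t q) / n) {i : ι} (hi : i ∈ rejectionSet t q) :
    q i ≤ α / n * #(rejectionSet t q) := by
  simp only [rejectionSet, mem_filter, mem_univ, true_and] at hi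
  calc q i ≤ t q := hi
    _ ≤ #(rejectionSet t q) / n * α := (div_le_iff₀ hα).1 hsc
    _ = α / n * #(rejectionSet t q) := by ring

lemma integrable_indicator_inv_card_rejectionSet {μ : Measure Ω} [IsFiniteMeasure μ]
    {P : Ω → ι → ℝ} (hP : Measurable P) (ht : Measurable t) (i : ι) :
    Integrable ({ω | i ∈ rejectionSet t (P ω)}.indicator
      fun ω => (#(rejectionSet t (P ω)) : ℝ)⁻¹) μ :=
  integrable_indicator_inv_natCast (measurableSet_mem_rejectionSet hP ht i)
    ((measurable_card_rejectionSet ht).comp hP) fun _ _ => card_le_univ _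

theorem integral_indicator_inv_card_rejectionSet_le {μ : Measure Ω} [IsFiniteMeasure μ]
    {P : Ω → ι → ℝ} (hP : Measurable P) (ht : Measurable t) (ht_anti : Antitone t) {α : ℝ}
    (hα : 0 < α) (hα_le : α ≤ 1)
    (hsc : ∀ q, t q / α ≤ #(rejectionSet t q) / Fintype.card ι) {i : ι}
    (hnull : ∀ u ∈ Set.Icc (0 : ℝ) 1, μ.real {ω | P ω i ≤ u} ≤ u)
    (hprds : IsWeakPRDSAt μ P i) :
    ∫ ω, {ω | i ∈ rejectionSet t (P ω)}.indicator
        (fun ω => (#(rejectionSet t (P ω)) : ℝ)⁻¹) ω ∂μ ≤ α / Fintype.card ι := by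
  set n := Fintype.card ι
  set c := α / n
  set N : Ω → ℕ := fun ω => #(rejectionSet t (P ω))
  set E := {ω | i ∈ rejectionSet t (P ω)}
  set A : ℕ → Set Ω := fun k => {ω | P ω i ≤ c * k}
  set B : ℕ → Set Ω := fun k => {ω | N ω ≤ k}
  have hc : 0 ≤ c := by positivity
  have hNm : Measurable N := (measurable_card_rejectionSet ht).comp hP
  have hcu : ∀ k ≤ n, c * k ∈ Set.Icc (0 : ℝ) 1 := fun k hk => by
    refine ⟨by positivity, ?_⟩
    rw [div_mul_comm, mul_comm]
    exact mul_le_one₀ hα_le (by positivity) (div_le_one_of_le₀ (by exact_mod_cast hk) n.cast_nonneg)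
  have hEA : ∀ k, E ∩ {ω | N ω = k + 1} ⊆ A (k + 1) ∩ (B (k + 1) \ B k) := by
    rintro k ω ⟨hωE, hωN⟩
    have hωN' : N ω = k + 1 := hωN
    refine ⟨?_, hωN'.le, fun h => by simp [B, hωN'] at h⟩
    simpa only [A, Set.mem_ofPred_eq, ← hωN'] using
      le_div_mul_card_of_mem_rejectionSet hα (hsc (P ω)) hωE
  have hcond : ∀ k < n, μ.real (B k ∩ A k) / μ.real (A k) ≤
      μ.real (B k ∩ A (k + 1)) / μ.real (A (k + 1)) := fun k hk =>
    measureReal_inter_div_le_of_pos_imp <|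
      hprds _ (measurable_card_rejectionSet ht measurableSet_Iic)
        (isUpperSet_card_rejectionSet_le ht_anti k) _ _ (hcu k hk.le)
        (by exact_mod_cast hcu (k + 1) hk) (by gcongr; simp)
  have hAc : ∀ k < n, μ.real (A (k + 1)) ≤ c * (k + 1) := fun k hk => by
    exact_mod_cast hnull _ (hcu (k + 1) hk)
  have hA : Monotone A := fun k l hkl ω hω =>
    hω.trans (mul_le_mul_of_nonneg_left (by exact_mod_cast hkl) hc)
  have hB : Monotone B := fun k l hkl ω hω => hω.trans hkl
  rw [integral_indicator_inv_natCast (measurableSet_mem_rejectionSet hP ht i) hNm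
    (fun _ _ => card_le_univ _), sum_range_succ', Nat.cast_zero, inv_zero, zero_mul, add_zero]
  calc ∑ k ∈ range n, ((k + 1 : ℕ) : ℝ)⁻¹ * μ.real (E ∩ {ω | N ω = k + 1})
      ≤ ∑ k ∈ range n, ((k : ℝ) + 1)⁻¹ * μ.real (A (k + 1) ∩ (B (k + 1) \ B k)) := by
        push_cast
        exact sum_le_sum fun k _ =>
          mul_le_mul_of_nonneg_left (measureReal_mono (hEA k)) (by positivity)
    _ ≤ c :=
        sum_inv_mul_measureReal_inter_sdiff_le hA hB (fun k => hNm measurableSet_Iic) hc hAc hcond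

end Rejection

theorem stmt9_general {Ω : Type*} [MeasurableSpace Ω] (μ : Measure Ω) [IsProbabilityMeasure μ]
    (m : ℕ) (α : ℝ) (hα : α ∈ Set.Ioo (0:ℝ) 1)
    (p : Fin m → Ω → ℝ) (hmeas : ∀ i, Measurable (p i))
    (H₀ : Finset (Fin m))
    (hnull : ∀ i ∈ H₀, ∀ u ∈ Set.Icc (0:ℝ) 1, (μ {ω | p i ω ≤ u}).toReal ≤ u)
    (t : (Fin m → ℝ) → ℝ) (htmeas : Measurable t)
    -- self-consistency: t(q) ∈ T(q) = {u ∈ [0,1] : Ĝ(q,u) ≥ u/α}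
    (hsc : ∀ q : Fin m → ℝ, t q ∈ Set.Icc (0:ℝ) 1 ∧
      t q / α ≤ ((Finset.univ.filter (fun i => q i ≤ t q)).card : ℝ) / m)
    -- coordinate-wise non-increasing
    (hanti : ∀ q q' : Fin m → ℝ, (∀ i, q' i ≤ q i) → t q ≤ t q')
    -- weak PRDS on H₀
    (hPRDS : ∀ i ∈ H₀, ∀ D : Set (Fin m → ℝ), MeasurableSet D →
      (∀ x y : Fin m → ℝ, x ∈ D → (∀ j, x j ≤ y j) → y ∈ D) →
      ∀ u v : ℝ, u ∈ Set.Icc (0:ℝ) 1 → v ∈ Set.Icc (0:ℝ) 1 → u ≤ v →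
      0 < μ {ω | p i ω ≤ u} →
      μ ({ω | (fun j => p j ω) ∈ D} ∩ {ω | p i ω ≤ u}) / μ {ω | p i ω ≤ u} ≤
        μ ({ω | (fun j => p j ω) ∈ D} ∩ {ω | p i ω ≤ v}) / μ {ω | p i ω ≤ v}) :
    (∫ ω, ((Finset.univ.filter (fun i => p i ω ≤ t (fun j => p j ω)) ∩ H₀).card : ℝ) /
        max ((Finset.univ.filter (fun i => p i ω ≤ t (fun j => p j ω))).card : ℝ) 1 ∂μ
      ≤ α * H₀.card / m) ∧
    α * H₀.card / m ≤ α := by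
  obtain ⟨hα0, hα1⟩ := hα
  have hH₀ : (#H₀ : ℝ) ≤ m := by exact_mod_cast (card_le_univ H₀).trans_eq (Fintype.card_fin m)
  refine ⟨?_, div_le_of_le_mul₀ m.cast_nonneg hα0.le (by nlinarith)⟩
  set P : Ω → Fin m → ℝ := fun ω j => p j ω
  have hP : Measurable P := measurable_pi_lambda _ hmeas
  have hfdp : ∀ ω, (#(rejectionSet t (P ω) ∩ H₀) : ℝ) / max (#(rejectionSet t (P ω)) : ℝ) 1 =
      ∑ i ∈ H₀, {ω | i ∈ rejectionSet t (P ω)}.indicator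
        (fun ω => (#(rejectionSet t (P ω)) : ℝ)⁻¹) ω := fun ω => by
    simp only [card_inter_div_max_one_eq_sum, Set.indicator_apply, Set.mem_ofPred_eq]
  calc _ = ∑ i ∈ H₀, ∫ ω, {ω | i ∈ rejectionSet t (P ω)}.indicator
        (fun ω => (#(rejectionSet t (P ω)) : ℝ)⁻¹) ω ∂μ := by
        simp_rw [← integral_finsetSum _ fun i _ =>
          integrable_indicator_inv_card_rejectionSet hP htmeas i, ← hfdp]
        rfl
    _ ≤ ∑ _i ∈ H₀, α / m := sum_le_sum fun i hi => by
        simpa only [Fintype.card_fin] using integral_indicator_inv_card_rejectionSet_le hP htmeas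
          (fun q q' h => hanti q' q h) hα0 hα1.le
          (fun q => by rw [Fintype.card_fin]; exact (hsc q).2) (hnull i hi)
          (fun D hD hup => hPRDS i hi D hD fun _ _ hx hxy => hup hxy hx)
    _ = α * #H₀ / m := by rw [sum_const, nsmul_eq_mul]; ring

theorem stmt9 {Ω : Type*} [MeasurableSpace Ω] (μ : Measure Ω) [IsProbabilityMeasure μ]
    (m : ℕ) (hm : 2 ≤ m) (α : ℝ) (hα : α ∈ Set.Ioo (0:ℝ) 1)
    (p : Fin m → Ω → ℝ) (hmeas : ∀ i, Measurable (p i))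
    (hval : ∀ i ω, p i ω ∈ Set.Icc (0:ℝ) 1)
    (H₀ : Finset (Fin m))
    (hnull : ∀ i ∈ H₀, ∀ u ∈ Set.Icc (0:ℝ) 1, (μ {ω | p i ω ≤ u}).toReal ≤ u)
    (t : (Fin m → ℝ) → ℝ) (htmeas : Measurable t)
    -- self-consistency: t(q) ∈ T(q) = {u ∈ [0,1] : Ĝ(q,u) ≥ u/α}
    (hsc : ∀ q : Fin m → ℝ, t q ∈ Set.Icc (0:ℝ) 1 ∧
      t q / α ≤ ((Finset.univ.filter (fun i => q i ≤ t q)).card : ℝ) / m)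
    -- coordinate-wise non-increasing
    (hanti : ∀ q q' : Fin m → ℝ, (∀ i, q' i ≤ q i) → t q ≤ t q')
    -- weak PRDS on H₀
    (hPRDS : ∀ i ∈ H₀, ∀ D : Set (Fin m → ℝ), MeasurableSet D →
      (∀ x y : Fin m → ℝ, x ∈ D → (∀ j, x j ≤ y j) → y ∈ D) →
      ∀ u v : ℝ, u ∈ Set.Icc (0:ℝ) 1 → v ∈ Set.Icc (0:ℝ) 1 → u ≤ v →
      0 < μ {ω | p i ω ≤ u} →
      μ ({ω | (fun j => p j ω) ∈ D} ∩ {ω | p i ω ≤ u}) / μ {ω | p i ω ≤ u} ≤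
        μ ({ω | (fun j => p j ω) ∈ D} ∩ {ω | p i ω ≤ v}) / μ {ω | p i ω ≤ v}) :
    (∫ ω, ((Finset.univ.filter (fun i => p i ω ≤ t (fun j => p j ω)) ∩ H₀).card : ℝ) /
        max ((Finset.univ.filter (fun i => p i ω ≤ t (fun j => p j ω))).card : ℝ) 1 ∂μ
      ≤ α * H₀.card / m) ∧
    α * H₀.card / m ≤ α :=
  stmt9_general μ m α hα p hmeas H₀ hnull t htmeas hsc hanti hPRDS
end

section
/- Under mutual independence of the null p-values, independence of null from alternative p-values, and exact uniformity P(p_i ≤ u) = u for all u ∈ [0,1] and i ∈ H₀, the Benjamini–Hochberg (linear step-up) procedure R with threshold t^su(p) = max{u : Ĝ(p,u) ≥ u/α} satisfies FDR(R, P) = α·m₀/m exactly. -/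
open MeasureTheory ProbabilityTheory

/-!
Let `K(q)` be the number of rejections, so that the step-up threshold is `α K(q) / m`, and let
`Wᵢ` be the threshold computed after setting `qᵢ` to `0`. Zeroing `qᵢ` can only raise the
threshold, and if `qᵢ ≤ Wᵢ` it does not change it at all; hence `qᵢ` is rejected iff `qᵢ ≤ Wᵢ`,
and then `K(q) = m Wᵢ / α`. This writes the false discovery proportion as
`(α / m) ∑_{i ∈ H₀} 1{qᵢ ≤ Wᵢ} / Wᵢ`. For a null `i`, `Wᵢ` is a function of the other p-values,
hence independent of the uniform `qᵢ`, and takes values in `[α / m, 1]`; integrating out `qᵢ`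
first gives `E[1{qᵢ ≤ Wᵢ} / Wᵢ] = E[Wᵢ / Wᵢ] = 1`.
-/

open Finset Function

section IndependentUniform

variable {Ω : Type*} [MeasurableSpace Ω] {μ : Measure Ω} [IsProbabilityMeasure μ]

lemma ProbabilityTheory.IndepFun.indepFun_prodMk_of_prodMk {β γ δ : Type*}
    [MeasurableSpace β] [MeasurableSpace γ] [MeasurableSpace δ]
    {X : Ω → β} {Y : Ω → γ} {Z : Ω → δ} (hX : Measurable X) (hY : Measurable Y)
    (hZ : Measurable Z) (hXY : IndepFun X Y μ) (hXYZ : IndepFun (fun ω => (X ω, Y ω)) Z μ) :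
    IndepFun X (fun ω => (Y ω, Z ω)) μ := by
  have hYZ : IndepFun Y Z μ := hXYZ.comp measurable_snd measurable_id
  rw [indepFun_iff_map_prod_eq_prod_map_map hX.aemeasurable (hY.prodMk hZ).aemeasurable,
    hYZ.map_prod_eq_prod_map_map hY.aemeasurable hZ.aemeasurable,
    ← Measure.prodAssoc_prod, ← hXY.map_prod_eq_prod_map_map hX.aemeasurable hY.aemeasurable,
    ← hXYZ.map_prod_eq_prod_map_map (hX.prodMk hY).aemeasurable hZ.aemeasurable,
    Measure.map_map MeasurableEquiv.prodAssoc.measurable ((hX.prodMk hY).prodMk hZ)]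
  rfl

lemma indepFun_update_zero {ι β : Type*} [DecidableEq ι] [MeasurableSpace β] [Zero β]
    {H₀ : Finset ι} {p : ι → Ω → β} (hmeas : ∀ i, Measurable (p i))
    (hindep₀ : iIndepFun (fun i : {i // i ∈ H₀} => p i.1) μ)
    (hindep₁ : IndepFun (fun ω => fun i : {i // i ∈ H₀} => p i.1 ω)
      (fun ω => fun i : {i // i ∉ H₀} => p i.1 ω) μ)
    {i : ι} (hi : i ∈ H₀) :
    IndepFun (p i) (fun ω => update (fun j => p j ω) i 0) μ := by
  set i' : {i // i ∈ H₀} := ⟨i, hi⟩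
  set T : Finset {i // i ∈ H₀} := {i'}ᶜ
  set Y : Ω → T → β := fun ω j => p j.1.1 ω
  set Z : Ω → {i // i ∉ H₀} → β := fun ω j => p j.1 ω
  have hY : Measurable Y := measurable_pi_lambda _ fun j => hmeas j.1.1
  have hZ : Measurable Z := measurable_pi_lambda _ fun j => hmeas j.1
  have hXY : IndepFun (p i) Y μ :=
    (hindep₀.indepFun_finset {i'} T disjoint_compl_right fun j => hmeas j.1).comp
      (measurable_pi_apply (⟨i', mem_singleton_self i'⟩ : ({i'} : Finset _))) measurable_id
  have hXYZ : IndepFun (fun ω => (p i ω, Y ω)) Z μ :=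
    hindep₁.comp (φ := fun v => (v i', fun j : T => v j.1))
      (measurable_pi_apply i' |>.prodMk (measurable_pi_lambda _ fun j => measurable_pi_apply _))
      measurable_id
  let g : (T → β) × ({i // i ∉ H₀} → β) → ι → β := fun yz j =>
    if hj : j ∈ H₀ then
      if hji : j = i then 0 else yz.1 ⟨⟨j, hj⟩, by simpa [T, i', Subtype.ext_iff] using hji⟩
    else yz.2 ⟨j, hj⟩
  have hg : Measurable g := by
    refine measurable_pi_lambda _ fun j => ?_
    by_cases hj : j ∈ H₀
    · by_cases hji : j = i
      · simp only [g, dif_pos hj, dif_pos hji, measurable_const]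
      · simp only [g, dif_pos hj, dif_neg hji]
        exact (measurable_pi_apply _).comp measurable_fst
    · simp only [g, dif_neg hj]
      exact (measurable_pi_apply _).comp measurable_snd
  have hupdate : (fun ω => update (fun j => p j ω) i 0) = g ∘ fun ω => (Y ω, Z ω) := by
    funext ω j
    by_cases hj : j ∈ H₀
    · by_cases hji : j = i
      · subst hji; simp [g, hj]
      · simp [g, hj, hji, Y]
    · have hji : j ≠ i := fun h => hj (h ▸ hi)
      simp [g, hj, hji, Z]
  rw [hupdate]
  exact (hXY.indepFun_prodMk_of_prodMk (hmeas i) hY hZ hXYZ).comp measurable_id hg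

lemma integral_ite_le_inv_eq_one {X W : Ω → ℝ} (hX : Measurable X) (hW : Measurable W)
    (hXW : IndepFun X W μ) (hX_cdf : ∀ u ∈ Set.Icc (0:ℝ) 1, (μ {ω | X ω ≤ u}).toReal = u)
    {a : ℝ} (ha : 0 < a) (hW_mem : ∀ ω, W ω ∈ Set.Icc a 1) :
    ∫ ω, (if X ω ≤ W ω then (W ω)⁻¹ else 0) ∂μ = 1 := by
  set f : ℝ × ℝ → ℝ := fun z => if z.1 ≤ z.2 then z.2⁻¹ else 0
  have hf : Measurable f :=
    Measurable.ite (measurableSet_le measurable_fst measurable_snd) measurable_snd.inv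
      measurable_const
  have hmap := hXW.map_prod_eq_prod_map_map hX.aemeasurable hW.aemeasurable
  have hint : Integrable f ((μ.map X).prod (μ.map W)) := by
    rw [← hmap, integrable_map_measure hf.aestronglyMeasurable (hX.prodMk hW).aemeasurable]
    refine Integrable.of_bound (hf.comp (hX.prodMk hW)).aestronglyMeasurable a⁻¹
      (ae_of_all _ fun ω => ?_)
    have hWpos := ha.trans_le (hW_mem ω).1
    simp only [f, comp_apply]
    split_ifs
    · rw [norm_inv, Real.norm_of_nonneg hWpos.le]
      exact inv_anti₀ ha (hW_mem ω).1
    · simpa using ha.le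
  have hinner : ∀ w ∈ Set.Icc a 1, ∫ x, f (x, w) ∂(μ.map X) = 1 := by
    intro w hw
    have hX_le : (μ.map X).real (Set.Iic w) = w := by
      rw [measureReal_def, Measure.map_apply hX measurableSet_Iic]
      exact hX_cdf w ⟨ha.le.trans hw.1, hw.2⟩
    have hf_w : (fun x => f (x, w)) = (Set.Iic w).indicator fun _ => w⁻¹ := by
      ext x
      simp [f, Set.indicator_apply]
    rw [hf_w, integral_indicator_const _ measurableSet_Iic, hX_le, smul_eq_mul,
      mul_inv_cancel₀ (ha.trans_le hw.1).ne']
  calc ∫ ω, f (X ω, W ω) ∂μ = ∫ z, f z ∂(μ.map fun ω => (X ω, W ω)) :=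
        (integral_map (hX.prodMk hW).aemeasurable hf.aestronglyMeasurable).symm
    _ = ∫ w, ∫ x, f (x, w) ∂(μ.map X) ∂(μ.map W) := by rw [hmap, integral_prod_symm _ hint]
    _ = ∫ _, 1 ∂(μ.map W) := integral_congr_ae <|
        ((ae_map_iff hW.aemeasurable measurableSet_Icc).2 (ae_of_all _ hW_mem)).mono hinner
    _ = 1 := by
        have := Measure.isProbabilityMeasure_map (μ := μ) hW.aemeasurable
        rw [integral_const, smul_eq_mul, mul_one, probReal_univ]

end IndependentUniform

namespace BenjaminiHochberg

variable {m : ℕ} {α : ℝ} {q q' : Fin m → ℝ} {i : Fin m}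

noncomputable def countLE (q : Fin m → ℝ) (u : ℝ) : ℕ := #{j | q j ≤ u}

noncomputable def rejectionCount (m : ℕ) (α : ℝ) (q : Fin m → ℝ) : ℕ :=
  Nat.findGreatest (fun k : ℕ => k ≤ countLE q (α * k / m)) m

noncomputable def bhThreshold (m : ℕ) (α : ℝ) (q : Fin m → ℝ) : ℝ :=
  α * rejectionCount m α q / m

lemma countLE_le (q : Fin m → ℝ) (u : ℝ) : countLE q u ≤ m :=
  (card_filter_le _ _).trans_eq (card_fin m)

lemma countLE_mono (q : Fin m → ℝ) : Monotone (countLE q) := fun _ _ huv =>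
  card_le_card <| monotone_filter_right _ fun _ _ hj => hj.trans huv

lemma countLE_le_countLE_of_le (hq : q' ≤ q) (u : ℝ) : countLE q u ≤ countLE q' u :=
  card_le_card <| monotone_filter_right _ fun j _ hj => (hq j).trans hj

lemma countLE_update_zero (hqi : 0 ≤ q i) {u : ℝ} (hu : q i ≤ u) :
    countLE (update q i 0) u = countLE q u := by
  unfold countLE
  congr 1
  refine filter_congr fun j _ => ?_
  rcases eq_or_ne j i with rfl | hji
  · simp [hu, hqi.trans hu]
  · rw [update_of_ne hji]

lemma rejectionCount_le (m : ℕ) (α : ℝ) (q : Fin m → ℝ) : rejectionCount m α q ≤ m :=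
  Nat.findGreatest_le m

lemma rejectionCount_le_countLE (m : ℕ) (α : ℝ) (q : Fin m → ℝ) :
    rejectionCount m α q ≤ countLE q (bhThreshold m α q) :=
  Nat.findGreatest_spec (P := fun k : ℕ => k ≤ countLE q (α * k / m))
    (Nat.zero_le m) (Nat.zero_le _)

lemma le_rejectionCount {k : ℕ} (hkm : k ≤ m) (hk : k ≤ countLE q (α * k / m)) :
    k ≤ rejectionCount m α q :=
  Nat.le_findGreatest hkm hk

lemma countLE_bhThreshold (hα : 0 ≤ α) (q : Fin m → ℝ) :
    countLE q (bhThreshold m α q) = rejectionCount m α q := by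
  refine le_antisymm (le_rejectionCount (countLE_le _ _) ?_) (rejectionCount_le_countLE m α q)
  refine countLE_mono q ?_
  unfold bhThreshold
  gcongr
  exact rejectionCount_le_countLE m α q

lemma bhThreshold_mem_Icc (hα₀ : 0 ≤ α) (hα₁ : α ≤ 1) (q : Fin m → ℝ) :
    bhThreshold m α q ∈ Set.Icc 0 1 := by
  refine ⟨by unfold bhThreshold; positivity, ?_⟩
  rcases m.eq_zero_or_pos with rfl | hm
  · simp [bhThreshold]
  calc bhThreshold m α q ≤ α * m / m := by
        unfold bhThreshold; gcongr; exact_mod_cast rejectionCount_le m α q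
    _ ≤ 1 := by rw [mul_div_cancel_right₀ _ (by positivity)]; exact hα₁

lemma tsu_eq_bhThreshold (hα₀ : 0 < α) (hα₁ : α ≤ 1) (q : Fin m → ℝ) :
    tsu m α q = bhThreshold m α q := by
  refine IsGreatest.csSup_eq ⟨⟨bhThreshold_mem_Icc hα₀.le hα₁ q, ?_⟩, ?_⟩
  · have hdiv : bhThreshold m α q / α = rejectionCount m α q / m := by
      unfold bhThreshold; field_simp
    rw [hdiv]
    gcongr
    exact_mod_cast (countLE_bhThreshold hα₀.le q).ge
  · rintro u ⟨-, hu⟩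
    have hu' : u ≤ α * countLE q u / m := by
      rw [div_le_iff₀' hα₀] at hu
      rwa [mul_div_assoc]
    refine hu'.trans ?_
    unfold bhThreshold
    gcongr
    exact le_rejectionCount (countLE_le q u) (countLE_mono q hu')

lemma rejectionCount_anti (hq : q' ≤ q) : rejectionCount m α q ≤ rejectionCount m α q' :=
  Nat.findGreatest_mono_left (fun _ hk => hk.trans (countLE_le_countLE_of_le hq _)) m

lemma bhThreshold_anti (hα : 0 ≤ α) (hq : q' ≤ q) : bhThreshold m α q ≤ bhThreshold m α q' := by
  unfold bhThreshold
  gcongr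
  exact rejectionCount_anti hq

lemma update_zero_le (hq : 0 ≤ q) (i : Fin m) : update q i 0 ≤ q := by
  intro j
  rcases eq_or_ne j i with rfl | hji
  · simpa using hq j
  · rw [update_of_ne hji]

lemma rejectionCount_update_zero (hq : 0 ≤ q) (hi : q i ≤ bhThreshold m α (update q i 0)) :
    rejectionCount m α q = rejectionCount m α (update q i 0) := by
  refine le_antisymm (rejectionCount_anti (update_zero_le hq i)) ?_
  refine le_rejectionCount (rejectionCount_le _ _ _) ?_
  have hK := rejectionCount_le_countLE m α (update q i 0)
  rwa [countLE_update_zero (hq i) hi] at hK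

lemma le_bhThreshold_iff_update_zero (hα : 0 ≤ α) (hq : 0 ≤ q) :
    q i ≤ bhThreshold m α q ↔ q i ≤ bhThreshold m α (update q i 0) := by
  refine ⟨fun h => h.trans (bhThreshold_anti hα (update_zero_le hq i)), fun h => ?_⟩
  rwa [bhThreshold, rejectionCount_update_zero hq h]

lemma one_le_rejectionCount_update_zero (hα : 0 ≤ α) (q : Fin m → ℝ) (i : Fin m) :
    1 ≤ rejectionCount m α (update q i 0) := by
  refine le_rejectionCount i.pos ?_
  refine card_pos.mpr ⟨i, mem_filter.mpr ⟨mem_univ i, ?_⟩⟩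
  rw [update_self]
  positivity

lemma bhThreshold_update_zero_mem_Icc (hα₀ : 0 ≤ α) (hα₁ : α ≤ 1) (q : Fin m → ℝ) (i : Fin m) :
    bhThreshold m α (update q i 0) ∈ Set.Icc (α / m) 1 := by
  refine ⟨?_, (bhThreshold_mem_Icc hα₀ hα₁ _).2⟩
  have hK : (1 : ℝ) ≤ rejectionCount m α (update q i 0) := by
    exact_mod_cast one_le_rejectionCount_update_zero hα₀ q i
  calc α / m = α * 1 / m := by rw [mul_one]
    _ ≤ bhThreshold m α (update q i 0) := by unfold bhThreshold; gcongr

lemma fdp_eq_sum_update_zero (hα₀ : 0 < α) (hα₁ : α ≤ 1) (hq : 0 ≤ q) (H₀ : Finset (Fin m)) :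
    (#(({i | q i ≤ tsu m α q} : Finset (Fin m)) ∩ H₀) : ℝ) / max (#{i | q i ≤ tsu m α q} : ℝ) 1
      = ∑ i ∈ H₀, α / m * (if q i ≤ bhThreshold m α (update q i 0)
          then (bhThreshold m α (update q i 0))⁻¹ else 0) := by
  have hR : #{i | q i ≤ bhThreshold m α q} = rejectionCount m α q := countLE_bhThreshold hα₀.le q
  rw [tsu_eq_bhThreshold hα₀ hα₁, hR, filter_inter, univ_inter, card_filter]
  push_cast
  rw [sum_div]
  refine sum_congr rfl fun i _ => ?_
  by_cases h : q i ≤ bhThreshold m α q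
  · have h' := (le_bhThreshold_iff_update_zero hα₀.le hq).1 h
    have hK : (1 : ℝ) ≤ rejectionCount m α (update q i 0) := by
      exact_mod_cast one_le_rejectionCount_update_zero hα₀.le q i
    have hm : (0 : ℝ) < m := by exact_mod_cast i.pos
    rw [if_pos h, if_pos h', rejectionCount_update_zero hq h', max_eq_left hK, bhThreshold]
    field_simp
  · rw [if_neg h, if_neg (mt (le_bhThreshold_iff_update_zero hα₀.le hq).2 h)]
    simp

lemma measurable_countLE (u : ℝ) : Measurable fun q : Fin m → ℝ => countLE q u := by
  simp_rw [countLE, card_filter]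
  exact Finset.measurable_sum _ fun j _ => Measurable.ite
    (measurableSet_le (measurable_pi_apply j) measurable_const) measurable_const measurable_const

lemma measurable_rejectionCount : Measurable (rejectionCount m α) :=
  measurable_findGreatest fun _ _ => measurableSet_le measurable_const (measurable_countLE _)

lemma measurable_bhThreshold : Measurable (bhThreshold m α) :=
  ((measurable_from_nat.comp measurable_rejectionCount).const_mul α).div_const _

end BenjaminiHochberg

open BenjaminiHochberg in
theorem stmt10_general {Ω : Type*} [MeasurableSpace Ω] (μ : Measure Ω) [IsProbabilityMeasure μ]
    (m : ℕ) (α : ℝ) (hα : α ∈ Set.Ioo (0:ℝ) 1)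
    (p : Fin m → Ω → ℝ) (hmeas : ∀ i, Measurable (p i))
    (hval : ∀ i ω, p i ω ∈ Set.Icc (0:ℝ) 1)
    (H₀ : Finset (Fin m))
    -- exact uniformity of the null p-values
    (hnull : ∀ i ∈ H₀, ∀ u ∈ Set.Icc (0:ℝ) 1, (μ {ω | p i ω ≤ u}).toReal = u)
    -- mutual independence of the null p-values
    (hindep₀ : iIndepFun
      (fun i : {i // i ∈ H₀} => p i.1) μ)
    -- independence of the null family from the alternative family
    (hindep₁ : IndepFun (fun ω => fun i : {i // i ∈ H₀} => p i.1 ω)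
      (fun ω => fun i : {i // i ∉ H₀} => p i.1 ω) μ) :
    ∫ ω, ((Finset.univ.filter (fun i => p i ω ≤ tsu m α (fun j => p j ω)) ∩ H₀).card : ℝ) /
        max ((Finset.univ.filter (fun i => p i ω ≤ tsu m α (fun j => p j ω))).card : ℝ) 1 ∂μ
      = α * H₀.card / m := by
  obtain ⟨hα₀, hα₁⟩ := hα
  set W : Fin m → Ω → ℝ := fun i ω => bhThreshold m α (update (fun j => p j ω) i 0)
  have hW_meas (i : Fin m) : Measurable (W i) :=
    measurable_bhThreshold.comp (measurable_update_left.comp (measurable_pi_lambda _ hmeas))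
  have hterm : ∀ i ∈ H₀, ∫ ω, (if p i ω ≤ W i ω then (W i ω)⁻¹ else 0) ∂μ = 1 := fun i hi =>
    integral_ite_le_inv_eq_one (hmeas i) (hW_meas i)
      ((indepFun_update_zero hmeas hindep₀ hindep₁ hi).comp measurable_id measurable_bhThreshold)
      (hnull i hi) (div_pos hα₀ (Nat.cast_pos.mpr i.pos))
      fun ω => bhThreshold_update_zero_mem_Icc hα₀.le hα₁.le _ i
  calc _ = ∫ ω, ∑ i ∈ H₀, α / m * (if p i ω ≤ W i ω then (W i ω)⁻¹ else 0) ∂μ :=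
        integral_congr_ae <| ae_of_all _ fun ω =>
          fdp_eq_sum_update_zero hα₀ hα₁.le (fun j => (hval j ω).1) H₀
    _ = ∑ i ∈ H₀, α / m * 1 := by
        rw [integral_finsetSum _ fun i hi =>
          (integrable_of_integral_eq_one (hterm i hi)).const_mul _]
        exact sum_congr rfl fun i hi => by rw [integral_const_mul, hterm i hi]
    _ = α * #H₀ / m := by
        rw [sum_const, nsmul_eq_mul]
        ring

theorem stmt10 {Ω : Type*} [MeasurableSpace Ω] (μ : Measure Ω) [IsProbabilityMeasure μ]
    (m : ℕ) (hm : 2 ≤ m) (α : ℝ) (hα : α ∈ Set.Ioo (0:ℝ) 1)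
    (p : Fin m → Ω → ℝ) (hmeas : ∀ i, Measurable (p i))
    (hval : ∀ i ω, p i ω ∈ Set.Icc (0:ℝ) 1)
    (H₀ : Finset (Fin m))
    -- exact uniformity of the null p-values
    (hnull : ∀ i ∈ H₀, ∀ u ∈ Set.Icc (0:ℝ) 1, (μ {ω | p i ω ≤ u}).toReal = u)
    -- mutual independence of the null p-values
    (hindep₀ : iIndepFun
      (fun i : {i // i ∈ H₀} => p i.1) μ)
    -- independence of the null family from the alternative family
    (hindep₁ : IndepFun (fun ω => fun i : {i // i ∈ H₀} => p i.1 ω)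
      (fun ω => fun i : {i // i ∉ H₀} => p i.1 ω) μ) :
    ∫ ω, ((Finset.univ.filter (fun i => p i ω ≤ tsu m α (fun j => p j ω)) ∩ H₀).card : ℝ) /
        max ((Finset.univ.filter (fun i => p i ω ≤ tsu m α (fun j => p j ω))).card : ℝ) 1 ∂μ
      = α * H₀.card / m :=
  stmt10_general μ m α hα p hmeas hval H₀ hnull hindep₀ hindep₁
end

section
/- Fix λ ∈ (0,1) and m ≥ 1. Define the Storey-type estimator f₁(p) = m(1−λ)/(Σᵢ 1{p_i > λ} + 1). For any m₀ ∈ {1,…,m}, if p is distributed according to the Dirac-uniform configuration DU(m₀−1, m) (first m₀−1 coordinates i.i.d. uniform on (0,1), remaining coordinates equal to 0), then E[f₁(p)] ≤ m/m₀. -/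
/-!
Write `N` for the number of coordinates exceeding `λ`. The identity `1/(N+1) = ∫₀¹ tᴺ dt` and
Fubini turn `E[1/(N+1)]` into `∫₀¹ E[tᴺ] dt`. By independence `E[tᴺ]` factors into one term per
coordinate: `λ + (1-λ)t` for each of the `m₀-1` uniform coordinates and `1` for each zero one.
Hence `E[1/(N+1)] = ∫₀¹ (λ + (1-λ)t)^(m₀-1) dt = (1 - λ^m₀) / ((1-λ)m₀)`, and
`E[f₁] = m(1 - λ^m₀)/m₀ ≤ m/m₀`.
-/

open MeasureTheory ProbabilityTheory Set
open scoped Finset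

lemma integral_Ioo_zero_one_pow (n : ℕ) : ∫ x in Ioo (0:ℝ) 1, x ^ n = ((n : ℝ) + 1)⁻¹ := by
  rw [← integral_Ioc_eq_integral_Ioo, ← intervalIntegral.integral_of_le zero_le_one,
    integral_pow]
  simp

lemma integral_Ioo_zero_one_ite_lt {lam : ℝ} (h0 : 0 ≤ lam) (h1 : lam < 1) (t : ℝ) :
    ∫ x in Ioo (0:ℝ) 1, (if lam < x then t else 1) = lam + (1 - lam) * t := by
  have hIoi : Ioi lam ∩ Ioo (0:ℝ) 1 = Ioo lam 1 := by
    rw [Ioi_inter_Ioo, max_eq_left h0]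
  have hIic : Iic lam ∩ Ioo (0:ℝ) 1 = Ioc 0 lam := by
    ext x; simp only [mem_inter_iff, mem_Iic, mem_Ioo, mem_Ioc]; grind
  change ∫ x in Ioo (0:ℝ) 1, (Ioi lam).piecewise (fun _ => t) (fun _ => 1) x = _
  rw [integral_piecewise measurableSet_Ioi (integrable_const t).integrableOn
    (integrable_const 1).integrableOn, setIntegral_const, setIntegral_const,
    measureReal_restrict_apply measurableSet_Ioi, compl_Ioi,
    measureReal_restrict_apply measurableSet_Iic, hIoi, hIic]
  simp only [measureReal_def, Real.volume_Ioo, Real.volume_Ioc, ENNReal.toReal_ofReal,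
    sub_nonneg, h1.le, h0, sub_zero, smul_eq_mul, mul_one]
  ring

lemma integral_Ioo_zero_one_affine_pow {lam : ℝ} (hlam : lam ≠ 1) (k : ℕ) :
    ∫ t in Ioo (0:ℝ) 1, (lam + (1 - lam) * t) ^ k
      = (1 - lam ^ (k + 1)) / ((1 - lam) * (k + 1)) := by
  have hq : 1 - lam ≠ 0 := sub_ne_zero.mpr hlam.symm
  rw [← integral_Ioc_eq_integral_Ioo, ← intervalIntegral.integral_of_le zero_le_one]
  have := intervalIntegral.integral_comp_mul_add (a := 0) (b := 1) (fun u : ℝ => u ^ k) hq lam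
  simp only [mul_zero, zero_add, mul_one, sub_add_cancel, integral_pow, smul_eq_mul] at this
  simp_rw [add_comm lam]
  rw [this]
  field_simp
  ring

lemma integral_inv_add_one_eq_integral_integral_pow {Ω : Type*} [MeasurableSpace Ω]
    (μ : Measure Ω) [IsFiniteMeasure μ] {N : Ω → ℕ} (hN : Measurable N) :
    ∫ ω, ((N ω : ℝ) + 1)⁻¹ ∂μ = ∫ t in Ioo (0:ℝ) 1, ∫ ω, t ^ N ω ∂μ := by
  simp_rw [← integral_Ioo_zero_one_pow]
  refine integral_integral_swap ?_
  have hmeas : Measurable fun z : Ω × ℝ => z.2 ^ N z.1 :=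
    measurable_snd.pow (hN.comp measurable_fst)
  refine Integrable.mono' (integrable_const (1:ℝ)) hmeas.aestronglyMeasurable ?_
  filter_upwards [Measure.quasiMeasurePreserving_snd.ae (ae_restrict_mem measurableSet_Ioo)]
    with z hz
  rw [Function.uncurry_apply_pair, Real.norm_eq_abs, abs_pow, abs_of_pos hz.1]
  exact pow_le_one₀ hz.1.le hz.2.le

lemma measurable_card_filter_lt {Ω ι : Type*} [MeasurableSpace Ω] [Fintype ι]
    {p : ι → Ω → ℝ} (hmeas : ∀ i, Measurable (p i)) (lam : ℝ) :
    Measurable fun ω => #{i | lam < p i ω} := by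
  simp_rw [Finset.card_filter]
  exact Finset.measurable_sum _ fun i _ =>
    (measurable_const.ite (measurableSet_lt measurable_const (hmeas i)) measurable_const)

lemma ProbabilityTheory.iIndepFun.integral_pow_card_filter_lt {Ω ι : Type*} [MeasurableSpace Ω]
    [Fintype ι] {μ : Measure Ω} {p : ι → Ω → ℝ} (hmeas : ∀ i, Measurable (p i)) (hindep : iIndepFun p μ)
    (lam t : ℝ) :
    ∫ ω, t ^ #{i | lam < p i ω} ∂μ = ∏ i, ∫ ω, (if lam < p i ω then t else 1) ∂μ := by
  rw [← hindep.integral_fun_prod_comp (f := fun _ x => if lam < x then t else 1)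
    (fun i => (hmeas i).aemeasurable)
    (fun _ => (measurable_const.ite measurableSet_Ioi measurable_const).aestronglyMeasurable)]
  congr 1 with ω
  rw [Finset.prod_ite]
  simp

lemma integral_ite_lt_of_map_eq_uniform {Ω : Type*} [MeasurableSpace Ω] {μ : Measure Ω}
    {X : Ω → ℝ} (hX : Measurable X) (hunif : μ.map X = volume.restrict (Ioo (0:ℝ) 1))
    {lam : ℝ} (h0 : 0 ≤ lam) (h1 : lam < 1) (t : ℝ) :
    ∫ ω, (if lam < X ω then t else 1) ∂μ = lam + (1 - lam) * t := by
  rw [← integral_Ioo_zero_one_ite_lt h0 h1, ← hunif, integral_map hX.aemeasurable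
    (measurable_const.ite measurableSet_Ioi measurable_const).aestronglyMeasurable]

lemma integral_pow_card_filter_lt_of_uniform_zero {Ω : Type*} [MeasurableSpace Ω]
    {μ : Measure Ω} [IsProbabilityMeasure μ] {m k : ℕ} (hk : k ≤ m) {lam : ℝ} (h0 : 0 ≤ lam)
    (h1 : lam < 1) {p : Fin m → Ω → ℝ} (hmeas : ∀ i, Measurable (p i))
    (hindep : iIndepFun p μ)
    (hunif : ∀ i : Fin m, (i : ℕ) < k → μ.map (p i) = volume.restrict (Ioo (0:ℝ) 1))
    (hzero : ∀ i : Fin m, k ≤ (i : ℕ) → ∀ ω, p i ω = 0) (t : ℝ) :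
    ∫ ω, t ^ #{i | lam < p i ω} ∂μ = (lam + (1 - lam) * t) ^ k := by
  have hfactor (i : Fin m) : ∫ ω, (if lam < p i ω then t else 1) ∂μ
      = if (i : ℕ) < k then lam + (1 - lam) * t else 1 := by
    split_ifs with hi
    · exact integral_ite_lt_of_map_eq_uniform (hmeas i) (hunif i hi) h0 h1 t
    · simp [hzero i (not_lt.mp hi), not_lt.mpr h0]
  rw [hindep.integral_pow_card_filter_lt hmeas, Finset.prod_congr rfl fun i _ => hfactor i,
    Finset.prod_ite, Finset.prod_const, Finset.prod_const_one, mul_one,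
    Fin.card_filter_val_lt, min_eq_right hk]

theorem stmt12 {Ω : Type*} [MeasurableSpace Ω] (μ : Measure Ω) [IsProbabilityMeasure μ]
    (m m₀ : ℕ) (hm₀ : 1 ≤ m₀) (hm : m₀ ≤ m)
    (lam : ℝ) (hlam : lam ∈ Set.Ioo (0:ℝ) 1)
    (p : Fin m → Ω → ℝ) (hmeas : ∀ i, Measurable (p i))
    (hindep : iIndepFun p μ)
    -- the first m₀ - 1 coordinates are uniform on (0,1)
    (hunif : ∀ i : Fin m, (i : ℕ) < m₀ - 1 → μ.map (p i) = volume.restrict (Set.Ioo (0:ℝ) 1))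
    -- the remaining coordinates are 0
    (hzero : ∀ i : Fin m, m₀ - 1 ≤ (i : ℕ) → ∀ ω, p i ω = 0) :
    ∫ ω, (m * (1 - lam)) /
        (((Finset.univ.filter (fun i => lam < p i ω)).card : ℝ) + 1) ∂μ
      ≤ m / m₀ := by
  obtain ⟨hl0, hl1⟩ := hlam
  have hm₀' : m₀ - 1 + 1 = m₀ := Nat.sub_add_cancel hm₀
  have hpgf := integral_pow_card_filter_lt_of_uniform_zero (by omega) hl0.le hl1 hmeas hindep
    hunif hzero
  calc ∫ ω, (m * (1 - lam)) / ((#{i | lam < p i ω} : ℝ) + 1) ∂μ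
      = m * (1 - lam) * ∫ ω, ((#{i | lam < p i ω} : ℝ) + 1)⁻¹ ∂μ := by
        simp_rw [div_eq_mul_inv]; exact integral_const_mul _ _
    _ = m * (1 - lam) * ((1 - lam ^ m₀) / ((1 - lam) * m₀)) := by
        rw [integral_inv_add_one_eq_integral_integral_pow μ (measurable_card_filter_lt hmeas lam)]
        simp_rw [hpgf]
        rw [integral_Ioo_zero_one_affine_pow hl1.ne, ← Nat.cast_add_one, hm₀']
    _ = m * (1 - lam ^ m₀) / m₀ := by field_simp
    _ ≤ m / m₀ := by
        gcongr
        exact mul_le_of_le_one_right m.cast_nonneg (by linarith [pow_pos hl0 m₀])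
end

section
/- Fix k₀ ∈ {1,…,m}. Define the quantile-type estimator f₂(p) = m(1−p₍ₖ₀₎)/(m−k₀+1), where p₍ₖ₀₎ is the k₀-th smallest coordinate of p. For any m₀ ∈ {1,…,m}, if p ~ DU(m₀−1, m), then E[f₂(p)] ≤ m/m₀. -/
/-!
With `n = m₀ - 1` uniform coordinates and `m - n` zeros, `p₍ₖ₀₎` exceeds `t ∈ (0, 1)` exactly when
fewer than `j = k₀ - (m - n)` of the uniform coordinates are `≤ t`. That count is binomial, so by
the layer-cake formula `E p₍ₖ₀₎ ≥ ∫₀¹ ∑_{r < j} C(n, r) tʳ (1 - t)ⁿ⁻ʳ dt`, and each Bernstein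
polynomial integrates to `1 / (n + 1)` (a Beta integral). Hence `E p₍ₖ₀₎ ≥ (k₀ - m + n) / m₀`,
which is the bound `E f₂ ≤ m / m₀` after multiplying out.
-/

open MeasureTheory ProbabilityTheory Set Finset
open scoped Nat ENNReal

lemma integral_pow_mul_one_sub_pow (a b : ℕ) :
    ∫ x in (0:ℝ)..1, x ^ a * (1 - x) ^ b = a ! * b ! / (a + b + 1)! := by
  have hβ : Complex.betaIntegral (a + 1) (b + 1) = ↑(∫ x in (0:ℝ)..1, x ^ a * (1 - x) ^ b) := by
    rw [Complex.betaIntegral, ← intervalIntegral.integral_ofReal]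
    refine intervalIntegral.integral_congr fun x _ => ?_
    simp only [add_sub_cancel_right, Complex.cpow_natCast]
    push_cast; rfl
  apply Complex.ofReal_injective
  rw [← hβ, Complex.betaIntegral_eq_Gamma_mul_div _ _ (by simp; positivity) (by simp; positivity),
    show (a + 1 + (b + 1) : ℂ) = ↑(a + b + 1) + 1 by push_cast; ring,
    Complex.Gamma_nat_eq_factorial, Complex.Gamma_nat_eq_factorial,
    Complex.Gamma_nat_eq_factorial]
  push_cast; rfl

lemma lintegral_choose_mul_pow_mul_one_sub_pow {n r : ℕ} (hr : r ≤ n) :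
    ∫⁻ t in Ioo (0:ℝ) 1, n.choose r * ENNReal.ofReal t ^ r * ENNReal.ofReal (1 - t) ^ (n - r)
      = ((n : ℝ≥0∞) + 1)⁻¹ := by
  set f : ℝ → ℝ := fun t => n.choose r * t ^ r * (1 - t) ^ (n - r)
  have hf : ∀ t ∈ Ioo (0:ℝ) 1, 0 ≤ f t := fun t ht =>
    mul_nonneg (by have := ht.1.le; positivity) (pow_nonneg (sub_nonneg.2 ht.2.le) _)
  have hint : ∫ t in Ioo (0:ℝ) 1, f t = 1 / (n + 1) := by
    rw [← integral_Ioc_eq_integral_Ioo, ← intervalIntegral.integral_of_le zero_le_one]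
    simp only [f, mul_assoc, intervalIntegral.integral_const_mul, integral_pow_mul_one_sub_pow,
      Nat.add_sub_cancel' hr, Nat.factorial_succ]
    have hchoose : (n.choose r : ℝ) * (r ! * (n - r)!) = n ! := by
      exact_mod_cast (mul_assoc _ _ _).symm.trans (Nat.choose_mul_factorial_mul_factorial hr)
    field_simp
    push_cast
    linear_combination (n + 1 : ℝ) * hchoose
  calc ∫⁻ t in Ioo (0:ℝ) 1, n.choose r * ENNReal.ofReal t ^ r * ENNReal.ofReal (1 - t) ^ (n - r)
      = ∫⁻ t in Ioo (0:ℝ) 1, ENNReal.ofReal (f t) := by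
        refine setLIntegral_congr_fun measurableSet_Ioo fun t ht => ?_
        rw [ENNReal.ofReal_mul (by have := ht.1.le; positivity),
          ENNReal.ofReal_mul (by positivity), ENNReal.ofReal_natCast,
          ENNReal.ofReal_pow ht.1.le, ENNReal.ofReal_pow (sub_nonneg.2 ht.2.le)]
    _ = ENNReal.ofReal (1 / (n + 1)) := by
        rw [← hint, ofReal_integral_eq_lintegral_ofReal]
        · exact (by fun_prop : Continuous f).integrableOn_Icc.mono_set Ioo_subset_Icc_self
        · exact ae_restrict_of_forall_mem measurableSet_Ioo hf
    _ = ((n : ℝ≥0∞) + 1)⁻¹ := by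
        rw [one_div, ENNReal.ofReal_inv_of_pos (by positivity)]
        norm_cast

section Counting

variable {ι Ω β : Type*} [DecidableEq ι] {p : ι → Ω → β} {A : Set β} [DecidablePred (· ∈ A)]
  {S T : Finset ι}

lemma setOf_filter_eq_eq_iInter (hTS : T ⊆ S) :
    {ω | {i ∈ S | p i ω ∈ A} = T} = ⋂ i ∈ S, p i ⁻¹' (if i ∈ T then A else Aᶜ) := by
  ext ω
  simp only [Set.mem_ofPred_eq, mem_iInter, Set.mem_preimage]
  constructor
  · rintro rfl i hi
    split_ifs with h
    · exact (mem_filter.1 h).2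
    · exact fun hA => h (mem_filter.2 ⟨hi, hA⟩)
  · intro h
    ext i
    by_cases hiT : i ∈ T
    · simpa [hiT, hTS hiT] using h i (hTS hiT)
    · by_cases hiS : i ∈ S
      · simpa [hiT, hiS] using h i hiS
      · simp [hiT, hiS]

variable [MeasurableSpace Ω] [MeasurableSpace β] {μ : Measure Ω}

lemma measurableSet_setOf_filter_eq (hmeas : ∀ i, Measurable (p i)) (hA : MeasurableSet A)
    (hTS : T ⊆ S) : MeasurableSet {ω | {i ∈ S | p i ω ∈ A} = T} := by
  rw [setOf_filter_eq_eq_iInter hTS]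
  refine .biInter S.countable_toSet fun i _ => hmeas i ?_
  split_ifs
  exacts [hA, hA.compl]

lemma measure_setOf_filter_eq (hindep : iIndepFun p μ) (hA : MeasurableSet A) (hTS : T ⊆ S) :
    μ {ω | {i ∈ S | p i ω ∈ A} = T} = (∏ i ∈ T, μ (p i ⁻¹' A)) * ∏ i ∈ S \ T, μ (p i ⁻¹' Aᶜ) := by
  rw [setOf_filter_eq_eq_iInter hTS,
    hindep.measure_inter_preimage_eq_mul S fun i _ => by split_ifs; exacts [hA, hA.compl],
    ← prod_sdiff hTS, mul_comm]
  congr 1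
  · exact prod_congr rfl fun i hi => by rw [if_pos hi]
  · exact prod_congr rfl fun i hi => by rw [if_neg (mem_sdiff.1 hi).2]

lemma measure_card_filter_eq (hindep : iIndepFun p μ) (hmeas : ∀ i, Measurable (p i))
    (hA : MeasurableSet A) {a b : ℝ≥0∞} (ha : ∀ i ∈ S, μ (p i ⁻¹' A) = a)
    (hb : ∀ i ∈ S, μ (p i ⁻¹' Aᶜ) = b) (r : ℕ) :
    μ {ω | #{i ∈ S | p i ω ∈ A} = r} = (#S).choose r * a ^ r * b ^ (#S - r) := by
  have hunion : {ω | #{i ∈ S | p i ω ∈ A} = r}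
      = ⋃ T ∈ S.powersetCard r, {ω | {i ∈ S | p i ω ∈ A} = T} := by
    ext ω
    simp only [Set.mem_ofPred_eq, mem_iUnion, mem_powersetCard, exists_prop]
    exact ⟨fun h => ⟨_, ⟨filter_subset _ _, h⟩, rfl⟩, by rintro ⟨T, ⟨-, rfl⟩, rfl⟩; rfl⟩
  rw [hunion, measure_biUnion_finset]
  · rw [sum_congr rfl fun T hT => ?_, sum_const, card_powersetCard, nsmul_eq_mul, mul_assoc]
    obtain ⟨hTS, hTr⟩ := mem_powersetCard.1 hT
    rw [measure_setOf_filter_eq hindep hA hTS, prod_congr rfl fun i hi => ha i (hTS hi),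
      prod_congr rfl fun i hi => hb i (mem_sdiff.1 hi).1, prod_const, prod_const,
      card_sdiff_of_subset hTS, hTr]
  · exact fun T _ T' _ hne => disjoint_left.2 fun ω h h' => hne (h.symm.trans h')
  · exact fun T hT => measurableSet_setOf_filter_eq hmeas hA (mem_powersetCard.1 hT).1

end Counting

lemma measurable_card_filter {ι Ω β : Type*} [MeasurableSpace Ω] [MeasurableSpace β]
    {p : ι → Ω → β} (hmeas : ∀ i, Measurable (p i)) {A : Set β} [DecidablePred (· ∈ A)]
    (hA : MeasurableSet A) (S : Finset ι) : Measurable fun ω => #{i ∈ S | p i ω ∈ A} := by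
  simp_rw [card_filter]
  exact Finset.measurable_sum _ fun i _ =>
    Measurable.ite (hmeas i hA) measurable_const measurable_const

section Uniform

variable {Ω : Type*} [MeasurableSpace Ω] {μ : Measure Ω}

lemma measure_preimage_Iic_of_map_eq {X : Ω → ℝ} (hX : Measurable X)
    (hunif : μ.map X = volume.restrict (Ioo 0 1)) {t : ℝ} (ht : t ∈ Ioo (0:ℝ) 1) :
    μ (X ⁻¹' Iic t) = ENNReal.ofReal t := by
  rw [← Measure.map_apply hX measurableSet_Iic, hunif, Measure.restrict_apply measurableSet_Iic,
    show Iic t ∩ Ioo 0 1 = Ioc 0 t by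
      ext; simp only [mem_inter_iff, Set.mem_Iic, Set.mem_Ioo, Set.mem_Ioc]; grind [ht.2],
    Real.volume_Ioc, sub_zero]

lemma measure_preimage_compl_Iic_of_map_eq {X : Ω → ℝ} (hX : Measurable X)
    (hunif : μ.map X = volume.restrict (Ioo 0 1)) {t : ℝ} (ht : t ∈ Ioo (0:ℝ) 1) :
    μ (X ⁻¹' (Iic t)ᶜ) = ENNReal.ofReal (1 - t) := by
  rw [← Measure.map_apply hX measurableSet_Iic.compl, hunif,
    Measure.restrict_apply measurableSet_Iic.compl,
    show (Iic t)ᶜ ∩ Ioo 0 1 = Ioo t 1 by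
      ext; simp only [mem_inter_iff, mem_compl_iff, Set.mem_Iic, Set.mem_Ioo]; grind [ht.1],
    Real.volume_Ioo]

lemma lintegral_measure_card_filter_le_lt {ι : Type*} [DecidableEq ι] {p : ι → Ω → ℝ}
    (hindep : iIndepFun p μ) (hmeas : ∀ i, Measurable (p i)) {S : Finset ι}
    (hunif : ∀ i ∈ S, μ.map (p i) = volume.restrict (Ioo 0 1)) {j : ℕ} (hj : j ≤ #S + 1) :
    ∫⁻ t in Ioo (0:ℝ) 1, μ {ω | #{i ∈ S | p i ω ≤ t} < j} = j / (#S + 1) := by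
  have hsum : ∀ t ∈ Ioo (0:ℝ) 1, μ {ω | #{i ∈ S | p i ω ≤ t} < j}
      = ∑ r ∈ range j,
          (#S).choose r * ENNReal.ofReal t ^ r * ENNReal.ofReal (1 - t) ^ (#S - r) := by
    intro t ht
    have hunion : {ω | #{i ∈ S | p i ω ≤ t} < j}
        = ⋃ r ∈ range j, {ω | #{i ∈ S | p i ω ∈ Iic t} = r} := by
      ext; simp
    rw [hunion, measure_biUnion_finset]
    · exact sum_congr rfl fun r _ => measure_card_filter_eq hindep hmeas measurableSet_Iic
        (fun i hi => measure_preimage_Iic_of_map_eq (hmeas i) (hunif i hi) ht)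
        (fun i hi => measure_preimage_compl_Iic_of_map_eq (hmeas i) (hunif i hi) ht) r
    · exact fun r _ r' _ hne => disjoint_left.2 fun ω h h' => hne (h.symm.trans h')
    · exact fun r _ => measurable_card_filter hmeas (measurableSet_Iic (a := t)) S
        (measurableSet_singleton r)
  rw [setLIntegral_congr_fun measurableSet_Ioo hsum, lintegral_finsetSum _ fun r _ => by fun_prop,
    sum_congr rfl fun r hr => lintegral_choose_mul_pow_mul_one_sub_pow (by grind),
    sum_const, card_range, nsmul_eq_mul, div_eq_mul_inv]

end Uniform

lemma toReal_setLIntegral_measure_lt_le_integral {Ω : Type*} [MeasurableSpace Ω]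
    {μ : Measure Ω} {X : Ω → ℝ} (hX0 : 0 ≤ᵐ[μ] X) (hX : Integrable X μ) {s : Set ℝ}
    (hs : s ⊆ Ioi 0) : (∫⁻ t in s, μ {ω | t < X ω}).toReal ≤ ∫ ω, X ω ∂μ := by
  rw [integral_eq_lintegral_of_nonneg_ae hX0 hX.aestronglyMeasurable,
    lintegral_eq_lintegral_meas_lt μ hX0 hX.aemeasurable]
  refine ENNReal.toReal_mono ?_ (lintegral_mono_set hs)
  rw [← lintegral_eq_lintegral_meas_lt μ hX0 hX.aemeasurable]
  exact hX.lintegral_lt_top.ne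

section OrderStatistic

variable {ι α : Type*} [Fintype ι] [LinearOrder α]

/-- `x` is the `k`-th smallest entry of `v`, counted with multiplicity. -/
def IsOrderStatistic (k : ℕ) (v : ι → α) (x : α) : Prop :=
  ∀ t, x ≤ t ↔ k ≤ #{i | v i ≤ t}

lemma isOrderStatistic_of_sorted {m : ℕ} {v : ι → α} {q : ℕ → α}
    (hmono : ∀ k l, 1 ≤ k → k ≤ l → l ≤ m → q k ≤ q l)
    (hperm : Multiset.map v univ.val = Multiset.map (fun k => q (k + 1)) (Multiset.range m))
    {k : ℕ} (hk : 1 ≤ k) (hkm : k ≤ m) : IsOrderStatistic k v (q k) := by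
  intro t
  have hcount : #{i | v i ≤ t} = #{l ∈ range m | q (l + 1) ≤ t} := by
    simpa [Multiset.filter_map, Finset.card_def, Finset.filter_val] using
      congrArg (fun s => Multiset.card (s.filter (· ≤ t))) hperm
  rw [hcount]
  constructor
  · intro hqt
    calc k = #(range k) := (card_range k).symm
      _ ≤ _ := card_le_card fun l hl => by
        have hl := Finset.mem_range.1 hl
        exact mem_filter.2
          ⟨Finset.mem_range.2 (by omega), (hmono _ _ (by omega) hl hkm).trans hqt⟩
  · intro hkt
    by_contra! htq
    have hsub : {l ∈ range m | q (l + 1) ≤ t} ⊆ range (k - 1) := fun l hl => by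
      obtain ⟨hlm, hlt⟩ := mem_filter.1 hl
      by_contra hlk
      rw [Finset.mem_range] at hlm hlk
      exact (htq.trans_le ((hmono _ _ hk (by omega) (by omega)))).not_ge hlt
    have := Finset.card_le_card hsub
    rw [card_range] at this
    omega

lemma IsOrderStatistic.mem_Icc {k : ℕ} {v : ι → α} {x : α} (h : IsOrderStatistic k v x)
    (hk : 1 ≤ k) (hkι : k ≤ Fintype.card ι) {a b : α} (hv : ∀ i, v i ∈ Icc a b) :
    x ∈ Icc a b := by
  refine ⟨?_, (h b).2 ?_⟩
  · by_contra! hxa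
    have := (h x).1 le_rfl
    rw [filter_false_of_mem fun i _ => not_le.2 (hxa.trans_le (hv i).1)] at this
    simp at this
    omega
  · rwa [filter_true_of_mem fun i _ => (hv i).2, card_univ]

end OrderStatistic

lemma card_filter_le_eq_card_compl_add {ι : Type*} [Fintype ι] [DecidableEq ι] {S : Finset ι}
    {v : ι → ℝ} (hzero : ∀ i ∉ S, v i = 0) {t : ℝ} (ht : 0 ≤ t) :
    #{i | v i ≤ t} = #Sᶜ + #{i ∈ S | v i ≤ t} := by
  rw [← card_union_of_disjoint (disjoint_compl_left.mono_right (filter_subset _ S))]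
  congr 1
  ext i
  by_cases hi : i ∈ S <;> simp [hi, hzero i, ht]

section DiracUniform

variable {Ω ι : Type*} [MeasurableSpace Ω] {μ : Measure Ω} [Fintype ι] {p : ι → Ω → ℝ}
  {S : Finset ι} {k : ℕ} {X : Ω → ℝ}

lemma ae_mem_Icc_of_map_eq_or_eq_zero (hmeas : ∀ i, Measurable (p i))
    (hunif : ∀ i ∈ S, μ.map (p i) = volume.restrict (Ioo 0 1))
    (hzero : ∀ i ∉ S, ∀ ω, p i ω = 0) : ∀ᵐ ω ∂μ, ∀ i, p i ω ∈ Icc (0:ℝ) 1 := by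
  refine ae_all_iff.2 fun i => ?_
  by_cases hi : i ∈ S
  · have : ∀ᵐ x ∂μ.map (p i), x ∈ Ioo (0:ℝ) 1 := hunif i hi ▸ ae_restrict_mem measurableSet_Ioo
    exact ((ae_map_iff (hmeas i).aemeasurable measurableSet_Ioo).1 this).mono
      fun ω h => Ioo_subset_Icc_self h
  · exact .of_forall fun ω => by simp [hzero i hi ω]

lemma measurable_of_isOrderStatistic (hmeas : ∀ i, Measurable (p i))
    (hX : ∀ ω, IsOrderStatistic k (p · ω) (X ω)) : Measurable X := by
  refine measurable_of_Iic fun t => ?_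
  have : X ⁻¹' Iic t = (fun ω => #{i ∈ univ | p i ω ∈ Iic t}) ⁻¹' Ici k := by
    ext ω
    exact hX ω t
  rw [this]
  exact measurable_card_filter hmeas (measurableSet_Iic (a := t)) univ measurableSet_Ici

lemma integrable_of_isOrderStatistic [IsFiniteMeasure μ] (hmeas : ∀ i, Measurable (p i))
    (hbdd : ∀ᵐ ω ∂μ, ∀ i, p i ω ∈ Icc (0:ℝ) 1) (hk : 1 ≤ k) (hkι : k ≤ Fintype.card ι)
    (hX : ∀ ω, IsOrderStatistic k (p · ω) (X ω)) : Integrable X μ :=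
  .of_mem_Icc 0 1 (measurable_of_isOrderStatistic hmeas hX).aemeasurable
    (hbdd.mono fun ω h => (hX ω).mem_Icc hk hkι h)

lemma le_integral_of_isOrderStatistic [DecidableEq ι] [IsFiniteMeasure μ]
    (hindep : iIndepFun p μ) (hmeas : ∀ i, Measurable (p i))
    (hunif : ∀ i ∈ S, μ.map (p i) = volume.restrict (Ioo 0 1))
    (hzero : ∀ i ∉ S, ∀ ω, p i ω = 0) (hk : 1 ≤ k) (hkι : k ≤ Fintype.card ι)
    (hX : ∀ ω, IsOrderStatistic k (p · ω) (X ω)) :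
    ((k : ℝ) - #Sᶜ) / (#S + 1) ≤ ∫ ω, X ω ∂μ := by
  have hbdd := ae_mem_Icc_of_map_eq_or_eq_zero hmeas hunif hzero
  have hX0 : 0 ≤ᵐ[μ] X := hbdd.mono fun ω h => ((hX ω).mem_Icc hk hkι h).1
  have hevent : ∀ t ∈ Ioo (0:ℝ) 1,
      μ {ω | t < X ω} = μ {ω | #{i ∈ S | p i ω ≤ t} < k - #Sᶜ} := fun t ht => by
    congr 1
    ext ω
    rw [mem_ofPred_eq, mem_ofPred_eq, ← not_le, hX ω t,
      card_filter_le_eq_card_compl_add (fun i hi => hzero i hi ω) ht.1.le]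
    omega
  have hj : k - #Sᶜ ≤ #S + 1 := by
    have := card_compl_add_card S
    omega
  have hkS : (k : ℝ) - #Sᶜ ≤ (k - #Sᶜ : ℕ) := by
    have := (Nat.cast_le (α := ℝ)).2 (le_tsub_add : k ≤ k - #Sᶜ + #Sᶜ)
    push_cast at this
    linarith
  calc ((k : ℝ) - #Sᶜ) / (#S + 1) ≤ ((k - #Sᶜ : ℕ) : ℝ) / (#S + 1) := by gcongr
    _ = (∫⁻ t in Ioo (0:ℝ) 1, μ {ω | t < X ω}).toReal := by
        rw [setLIntegral_congr_fun measurableSet_Ioo hevent,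
          lintegral_measure_card_filter_le_lt hindep hmeas hunif hj, ENNReal.toReal_div]
        norm_cast
    _ ≤ ∫ ω, X ω ∂μ := toReal_setLIntegral_measure_lt_le_integral hX0
        (integrable_of_isOrderStatistic hmeas hbdd hk hkι hX) Ioo_subset_Ioi_self

end DiracUniform

theorem stmt13_general {Ω : Type*} [MeasurableSpace Ω] (μ : Measure Ω) [IsProbabilityMeasure μ]
    (m m₀ : ℕ) (hm₀ : 1 ≤ m₀) (hm : m₀ ≤ m)
    (k₀ : ℕ) (hk₀ : 1 ≤ k₀) (hk₀m : k₀ ≤ m)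
    (p : Fin m → Ω → ℝ) (hmeas : ∀ i, Measurable (p i))
    (hindep : iIndepFun p μ)
    -- the first m₀ - 1 coordinates are uniform on (0,1)
    (hunif : ∀ i : Fin m, (i : ℕ) < m₀ - 1 → μ.map (p i) = volume.restrict (Set.Ioo (0:ℝ) 1))
    -- the remaining coordinates are 0
    (hzero : ∀ i : Fin m, m₀ - 1 ≤ (i : ℕ) → ∀ ω, p i ω = 0)
    -- q ω gives the order statistics of the p-value family (with q ω 0 = 0)
    (q : Ω → ℕ → ℝ)
    (hqmono : ∀ ω, ∀ k l, 1 ≤ k → k ≤ l → l ≤ m → q ω k ≤ q ω l)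
    (hqperm : ∀ ω, Multiset.map (fun i => p i ω) Finset.univ.val =
      Multiset.map (fun k => q ω (k + 1)) (Multiset.range m)) :
    ∫ ω, (m : ℝ) * (1 - q ω k₀) / ((m : ℝ) - k₀ + 1) ∂μ ≤ m / m₀ := by
  set S : Finset (Fin m) := {i | (i : ℕ) < m₀ - 1}
  have hS : #S = m₀ - 1 := by rw [Fin.card_filter_val_lt]; omega
  have hunifS : ∀ i ∈ S, μ.map (p i) = volume.restrict (Ioo 0 1) :=
    fun i hi => hunif i (by simpa [S] using hi)
  have hzeroS : ∀ i ∉ S, ∀ ω, p i ω = 0 := fun i hi => hzero i (by simpa [S] using hi)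
  have hq : ∀ ω, IsOrderStatistic k₀ (p · ω) (q ω k₀) :=
    fun ω => isOrderStatistic_of_sorted (hqmono ω) (hqperm ω) hk₀ hk₀m
  have hkι : k₀ ≤ Fintype.card (Fin m) := by simpa
  have hint := integrable_of_isOrderStatistic hmeas
    (ae_mem_Icc_of_map_eq_or_eq_zero hmeas hunifS hzeroS) hk₀ hkι hq
  have hE := le_integral_of_isOrderStatistic hindep hmeas hunifS hzeroS hk₀ hkι hq
  rw [card_compl, hS, Fintype.card_fin, Nat.cast_sub (by omega : m₀ - 1 ≤ m),
    Nat.cast_sub hm₀, Nat.cast_one, sub_add_cancel] at hE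
  have hc : (0 : ℝ) < m - k₀ + 1 := by
    have : (k₀ : ℝ) ≤ m := by exact_mod_cast hk₀m
    linarith
  have hm₀' : (0 : ℝ) < m₀ := by exact_mod_cast hm₀
  calc ∫ ω, (m : ℝ) * (1 - q ω k₀) / ((m : ℝ) - k₀ + 1) ∂μ
      = m / (m - k₀ + 1) * (1 - ∫ ω, q ω k₀ ∂μ) := by
        rw [integral_div, integral_const_mul, integral_sub (integrable_const 1) hint,
          integral_const]
        simp only [probReal_univ, smul_eq_mul, mul_one]
        ring
    _ ≤ m / (m - k₀ + 1) * ((m - k₀ + 1) / m₀) := by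
        gcongr
        rw [div_le_iff₀ hm₀'] at hE
        rw [le_div_iff₀ hm₀']
        linarith
    _ = m / m₀ := by field_simp

theorem stmt13 {Ω : Type*} [MeasurableSpace Ω] (μ : Measure Ω) [IsProbabilityMeasure μ]
    (m m₀ : ℕ) (hm₀ : 1 ≤ m₀) (hm : m₀ ≤ m)
    (k₀ : ℕ) (hk₀ : 1 ≤ k₀) (hk₀m : k₀ ≤ m)
    (p : Fin m → Ω → ℝ) (hmeas : ∀ i, Measurable (p i))
    (hindep : iIndepFun p μ)
    -- the first m₀ - 1 coordinates are uniform on (0,1)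
    (hunif : ∀ i : Fin m, (i : ℕ) < m₀ - 1 → μ.map (p i) = volume.restrict (Set.Ioo (0:ℝ) 1))
    -- the remaining coordinates are 0
    (hzero : ∀ i : Fin m, m₀ - 1 ≤ (i : ℕ) → ∀ ω, p i ω = 0)
    -- q ω gives the order statistics of the p-value family (with q ω 0 = 0)
    (q : Ω → ℕ → ℝ) (hq0 : ∀ ω, q ω 0 = 0)
    (hqmono : ∀ ω, ∀ k l, 1 ≤ k → k ≤ l → l ≤ m → q ω k ≤ q ω l)
    (hqperm : ∀ ω, Multiset.map (fun i => p i ω) Finset.univ.val =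
      Multiset.map (fun k => q ω (k + 1)) (Multiset.range m)) :
    ∫ ω, (m : ℝ) * (1 - q ω k₀) / ((m : ℝ) - k₀ + 1) ∂μ ≤ m / m₀ :=
  stmt13_general μ m m₀ hm₀ hm k₀ hk₀ hk₀m p hmeas hindep hunif hzero q hqmono hqperm
end

section
/- Let β : [0,∞) → [0,∞) be a non-decreasing function with ∫₀^∞ u⁻² β(u) du ≤ 1. Let p₁,…,p_m be arbitrary [0,1]-valued random variables with P(p_i ≤ u) ≤ u for all u and i ∈ H₀. Define t^{βsu}(p) = max{u ∈ [0,1] : Ĝ(p, β(u)) ≥ u/α} and R = {i : p_i ≤ β(t^{βsu}(p))}. Then FDR(R, P) ≤ α·m₀/m, regardless of the dependence structure of the p-values. -/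
/-!
Write `t` for the threshold and `R` for the rejection set. As `β` is monotone, the supremum
defining `t` still satisfies its constraint `t / α ≤ |R| / m`, so the false discovery proportion
is at most `(α / m) ∑_{i ∈ H₀} 1{pᵢ ≤ β t} / t`. For every `t ≥ 0`,
`1{x ≤ β t} / t ≤ ∫₀^∞ u⁻² 1{x ≤ β u} du`, a bound that no longer depends on `t`, so it does not
matter how `t` depends on the other p-values. By Tonelli and super-uniformity the expectation of
this integral for a null p-value is at most `∫₀^∞ u⁻² β u du ≤ 1`.
-/

open MeasureTheory Set ENNReal

/-- The β-modified step-up threshold. -/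
noncomputable def tbsu (m : ℕ) (α : ℝ) (β : ℝ → ℝ) (q : Fin m → ℝ) : ℝ :=
  sSup {u | u ∈ Set.Icc (0:ℝ) 1 ∧
    u / α ≤ ((Finset.univ.filter (fun i => q i ≤ β u)).card : ℝ) / m}

lemma integral_le_of_lintegral_ofReal_le {Ω : Type*} [MeasurableSpace Ω] {μ : Measure Ω}
    {f : Ω → ℝ} (hf : ∀ ω, 0 ≤ f ω) {c : ℝ} (hc : 0 ≤ c)
    (h : ∫⁻ ω, ENNReal.ofReal (f ω) ∂μ ≤ ENNReal.ofReal c) : ∫ ω, f ω ∂μ ≤ c := by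
  refine (ENNReal.ofReal_le_ofReal_iff hc).1 ?_
  calc ENNReal.ofReal (∫ ω, f ω ∂μ) ≤ ‖∫ ω, f ω ∂μ‖ₑ := Real.ofReal_le_enorm _
    _ ≤ ∫⁻ ω, ‖f ω‖ₑ ∂μ := enorm_integral_le_lintegral_enorm f
    _ = ∫⁻ ω, ENNReal.ofReal (f ω) ∂μ := by simp_rw [Real.enorm_eq_ofReal (hf _)]
    _ ≤ ENNReal.ofReal c := h

lemma lintegral_Ioi_inv_sq_of_pos {t : ℝ} (ht : 0 < t) :
    ∫⁻ u in Ioi t, ENNReal.ofReal (u ^ 2)⁻¹ = ENNReal.ofReal t⁻¹ := by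
  have hrpow : EqOn (fun u : ℝ => u ^ (-2 : ℝ)) (fun u => (u ^ 2)⁻¹) (Ioi t) := fun u hu => by
    simp [Real.rpow_neg (ht.trans hu).le]
  have hint : IntegrableOn (fun u : ℝ => (u ^ 2)⁻¹) (Ioi t) :=
    (integrableOn_Ioi_rpow_of_lt (by norm_num) ht).congr_fun hrpow measurableSet_Ioi
  rw [← ofReal_integral_eq_lintegral_ofReal hint
    (ae_restrict_of_forall_mem measurableSet_Ioi fun u _ => by positivity),
    ← setIntegral_congr_fun measurableSet_Ioi hrpow, integral_Ioi_rpow_of_lt (by norm_num) ht]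
  norm_num [Real.rpow_neg_one]

lemma lintegral_Ioi_inv_sq {t : ℝ} (ht : 0 ≤ t) :
    ∫⁻ u in Ioi t, ENNReal.ofReal (u ^ 2)⁻¹ = (ENNReal.ofReal t)⁻¹ := by
  obtain rfl | ht := ht.eq_or_lt
  · refine (ENNReal.eq_top_of_forall_nnreal_le fun r => ?_).trans (by simp)
    have hs : (0 : ℝ) < ((r : ℝ) + 1)⁻¹ := by positivity
    calc (r : ℝ≥0∞) ≤ ENNReal.ofReal (r + 1) := by
          rw [ENNReal.ofReal_add r.coe_nonneg zero_le_one, ofReal_coe_nnreal]; exact le_self_add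
      _ = ∫⁻ u in Ioi ((r : ℝ) + 1)⁻¹, ENNReal.ofReal (u ^ 2)⁻¹ := by
          rw [lintegral_Ioi_inv_sq_of_pos hs, inv_inv]
      _ ≤ ∫⁻ u in Ioi 0, ENNReal.ofReal (u ^ 2)⁻¹ := lintegral_mono_set (Ioi_subset_Ioi hs.le)
  · rw [lintegral_Ioi_inv_sq_of_pos ht, ENNReal.ofReal_inv_of_pos ht]

noncomputable def invSqMass (β : ℝ → ℝ) (x : ℝ) : ℝ≥0∞ :=
  ∫⁻ u in Ioi 0, {u | x ≤ β u}.indicator (fun u => ENNReal.ofReal (u ^ 2)⁻¹) u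

section Threshold

variable {β : ℝ → ℝ}

lemma inv_le_invSqMass (hβ : MonotoneOn β (Ici 0)) {t x : ℝ} (ht : 0 ≤ t) (hx : x ≤ β t) :
    (ENNReal.ofReal t)⁻¹ ≤ invSqMass β x := by
  calc (ENNReal.ofReal t)⁻¹ = ∫⁻ u in Ioi t, ENNReal.ofReal (u ^ 2)⁻¹ :=
        (lintegral_Ioi_inv_sq ht).symm
    _ = ∫⁻ u in Ioi t, {u | x ≤ β u}.indicator (fun u => ENNReal.ofReal (u ^ 2)⁻¹) u :=
        setLIntegral_congr_fun measurableSet_Ioi fun u hu =>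
          (indicator_of_mem (s := {u | x ≤ β u}) (hx.trans (hβ ht (ht.trans hu.le) hu.le))
            fun u => ENNReal.ofReal (u ^ 2)⁻¹).symm
    _ ≤ invSqMass β x := lintegral_mono_set (Ioi_subset_Ioi ht)

variable {m : ℕ} {α : ℝ}

lemma tbsu_nonneg (q : Fin m → ℝ) : 0 ≤ tbsu m α β q :=
  Real.sSup_nonneg fun _ hu => hu.1.1

/-- Monotonicity of `β` makes the rejection count nondecreasing in `u`, so the supremum still
satisfies the constraint. -/
lemma tbsu_div_le_card (hα : 0 < α) (hβ : MonotoneOn β (Ici 0)) (q : Fin m → ℝ) :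
    tbsu m α β q / α ≤
      ((Finset.univ.filter (fun i => q i ≤ β (tbsu m α β q))).card : ℝ) / m := by
  rw [div_le_iff₀' hα]
  refine Real.sSup_le (fun u hu => ?_) (by positivity)
  have hut : u ≤ tbsu m α β q := le_csSup ⟨1, fun _ hv => hv.1.2⟩ hu
  rw [← div_le_iff₀' hα]
  refine hu.2.trans (div_le_div_of_nonneg_right ?_ m.cast_nonneg)
  exact_mod_cast Finset.card_le_card <| Finset.monotone_filter_right _ fun i _ (hi : q i ≤ β u) =>
    hi.trans (hβ hu.1.1 (tbsu_nonneg q) hut)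

end Threshold

lemma ofReal_div_max_one_le {a b : ℕ} {c t : ℝ} (hc : 0 < c) (ht : 0 ≤ t) (htb : t ≤ c * b) :
    ENNReal.ofReal (a / max (b : ℝ) 1) ≤ ENNReal.ofReal c * a * (ENNReal.ofReal t)⁻¹ := by
  obtain rfl | ht := ht.eq_or_lt
  · obtain rfl | ha := a.eq_zero_or_pos
    · simp
    · simp [ENNReal.mul_top, hc, ha.ne']
  have hb : (0 : ℝ) < b := pos_of_mul_pos_right (ht.trans_le htb) hc.le
  have hb1 : (1 : ℝ) ≤ b := Nat.one_le_cast.2 (Nat.cast_pos.1 hb)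
  rw [max_eq_left hb1, ← ENNReal.ofReal_inv_of_pos ht, ← ofReal_natCast, ← ofReal_mul hc.le,
    ← ofReal_mul (by positivity)]
  refine ENNReal.ofReal_le_ofReal ?_
  rw [div_le_iff₀ hb]
  have : (a : ℝ) * t ≤ a * (c * b) := mul_le_mul_of_nonneg_left htb a.cast_nonneg
  field_simp
  linarith

section FalseDiscoveries

variable {m : ℕ} {α : ℝ} {β : ℝ → ℝ}

lemma ofReal_fdp_le (hα : 0 < α) (hβ : MonotoneOn β (Ici 0)) (q : Fin m → ℝ)
    (H₀ : Finset (Fin m)) :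
    ENNReal.ofReal (((Finset.univ.filter (fun i => q i ≤ β (tbsu m α β q)) ∩ H₀).card : ℝ) /
        max ((Finset.univ.filter (fun i => q i ≤ β (tbsu m α β q))).card : ℝ) 1)
      ≤ ENNReal.ofReal (α / m) * ∑ i ∈ H₀, invSqMass β (q i) := by
  obtain rfl | hm := m.eq_zero_or_pos
  · simp
  set t := tbsu m α β q
  set R := Finset.univ.filter (fun i => q i ≤ β t)
  have ht : 0 ≤ t := tbsu_nonneg q
  have hR : t ≤ α / m * R.card :=
    ((div_le_iff₀' hα).1 (tbsu_div_le_card hα hβ q)).trans_eq (by ring)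
  calc _ ≤ ENNReal.ofReal (α / m) * (R ∩ H₀).card * (ENNReal.ofReal t)⁻¹ :=
        ofReal_div_max_one_le (by positivity) ht hR
    _ = ENNReal.ofReal (α / m) * ∑ i ∈ R ∩ H₀, (ENNReal.ofReal t)⁻¹ := by
        rw [Finset.sum_const, nsmul_eq_mul, mul_assoc]
    _ ≤ ENNReal.ofReal (α / m) * ∑ i ∈ R ∩ H₀, invSqMass β (q i) := by
        gcongr with i hi
        exact inv_le_invSqMass hβ ht (Finset.mem_filter.1 (Finset.mem_inter.1 hi).1).2
    _ ≤ ENNReal.ofReal (α / m) * ∑ i ∈ H₀, invSqMass β (q i) := by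
        gcongr
        exact Finset.inter_subset_right

end FalseDiscoveries

section SuperUniform

variable {Ω : Type*} [MeasurableSpace Ω] {μ : Measure Ω} {X : Ω → ℝ} {β : ℝ → ℝ}

lemma aemeasurable_indicator_inv_sq (hX : AEMeasurable X μ) (hβ : MonotoneOn β (Ici 0)) :
    AEMeasurable (fun z : Ω × ℝ =>
        {u | X z.1 ≤ β u}.indicator (fun u => ENNReal.ofReal (u ^ 2)⁻¹) z.2)
      (μ.prod (volume.restrict (Ioi 0))) := by
  have hβ' : AEMeasurable β (volume.restrict (Ioi 0)) :=
    aemeasurable_restrict_of_monotoneOn measurableSet_Ioi (hβ.mono Ioi_subset_Ici_self)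
  exact (by fun_prop : Measurable fun z : Ω × ℝ => ENNReal.ofReal (z.2 ^ 2)⁻¹).aemeasurable.indicator₀
    (nullMeasurableSet_le hX.comp_fst hβ'.comp_snd)

lemma measure_le_ofReal_of_superuniform [IsProbabilityMeasure μ]
    (hX : ∀ v ∈ Icc (0 : ℝ) 1, (μ {ω | X ω ≤ v}).toReal ≤ v) {v : ℝ} (hv : 0 ≤ v) :
    μ {ω | X ω ≤ v} ≤ ENNReal.ofReal v := by
  rcases le_total v 1 with hv1 | hv1
  · exact (ENNReal.le_ofReal_iff_toReal_le (measure_ne_top _ _) hv).2 (hX v ⟨hv, hv1⟩)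
  · exact prob_le_one.trans (ENNReal.one_le_ofReal.2 hv1)

lemma lintegral_invSqMass_le [IsProbabilityMeasure μ] (hXm : Measurable X)
    (hX : ∀ v ∈ Icc (0 : ℝ) 1, (μ {ω | X ω ≤ v}).toReal ≤ v)
    (hβ0 : ∀ u, 0 ≤ u → 0 ≤ β u) (hβ : MonotoneOn β (Ici 0))
    (hβint : IntegrableOn (fun u => β u / u ^ 2) (Ioi 0)) :
    ∫⁻ ω, invSqMass β (X ω) ∂μ ≤ ENNReal.ofReal (∫ u in Ioi 0, β u / u ^ 2) := by
  rw [ofReal_integral_eq_lintegral_ofReal hβint (ae_restrict_of_forall_mem measurableSet_Ioi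
    fun u hu => div_nonneg (hβ0 u (le_of_lt hu)) (sq_nonneg u))]
  unfold invSqMass
  rw [lintegral_lintegral_swap (aemeasurable_indicator_inv_sq hXm.aemeasurable hβ)]
  refine setLIntegral_mono' measurableSet_Ioi fun u (hu : 0 < u) => ?_
  calc ∫⁻ ω, {u | X ω ≤ β u}.indicator (fun u => ENNReal.ofReal (u ^ 2)⁻¹) u ∂μ
      = ∫⁻ ω, {ω | X ω ≤ β u}.indicator (fun _ => ENNReal.ofReal (u ^ 2)⁻¹) ω ∂μ := rfl
    _ = ENNReal.ofReal (u ^ 2)⁻¹ * μ {ω | X ω ≤ β u} :=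
        lintegral_indicator_const (measurableSet_le hXm measurable_const) _
    _ ≤ ENNReal.ofReal (u ^ 2)⁻¹ * ENNReal.ofReal (β u) := by
        gcongr
        exact measure_le_ofReal_of_superuniform hX (hβ0 u hu.le)
    _ = ENNReal.ofReal (β u / u ^ 2) := by
        rw [← ofReal_mul (by positivity), inv_mul_eq_div]

end SuperUniform

theorem stmt14_general {Ω : Type*} [MeasurableSpace Ω] (μ : Measure Ω) [IsProbabilityMeasure μ]
    (m : ℕ) (α : ℝ) (hα : α ∈ Set.Ioo (0:ℝ) 1)
    (β : ℝ → ℝ) (hβ0 : ∀ u, 0 ≤ u → 0 ≤ β u) (hβmono : MonotoneOn β (Set.Ici 0))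
    (hβint : IntegrableOn (fun u => β u / u ^ 2) (Set.Ioi 0))
    (hβ1 : ∫ u in Set.Ioi (0:ℝ), β u / u ^ 2 ≤ 1)
    (p : Fin m → Ω → ℝ) (hmeas : ∀ i, Measurable (p i))
    (H₀ : Finset (Fin m))
    (hnull : ∀ i ∈ H₀, ∀ u ∈ Set.Icc (0:ℝ) 1, (μ {ω | p i ω ≤ u}).toReal ≤ u) :
    ∫ ω, ((Finset.univ.filter
          (fun i => p i ω ≤ β (tbsu m α β (fun j => p j ω))) ∩ H₀).card : ℝ) /
        max ((Finset.univ.filter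
          (fun i => p i ω ≤ β (tbsu m α β (fun j => p j ω)))).card : ℝ) 1 ∂μ
      ≤ α * H₀.card / m := by
  have hα0 : 0 < α := hα.1
  have hmass_meas : ∀ i, AEMeasurable (fun ω => invSqMass β (p i ω)) μ := fun i =>
    (aemeasurable_indicator_inv_sq (hmeas i).aemeasurable hβmono).lintegral_prod_right'
  refine integral_le_of_lintegral_ofReal_le (fun ω => by positivity) (by positivity) ?_
  calc _ ≤ ∫⁻ ω, ENNReal.ofReal (α / m) * ∑ i ∈ H₀, invSqMass β (p i ω) ∂μ :=
        lintegral_mono fun ω => ofReal_fdp_le hα0 hβmono (fun j => p j ω) H₀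
    _ = ENNReal.ofReal (α / m) * ∑ i ∈ H₀, ∫⁻ ω, invSqMass β (p i ω) ∂μ := by
        rw [lintegral_const_mul' _ _ ofReal_ne_top,
          lintegral_finsetSum' _ fun i _ => hmass_meas i]
    _ ≤ ENNReal.ofReal (α / m) * ∑ _i ∈ H₀, 1 := by
        gcongr with i hi
        exact (lintegral_invSqMass_le (hmeas i) (hnull i hi) hβ0 hβmono hβint).trans
          (ENNReal.ofReal_le_one.2 hβ1)
    _ = ENNReal.ofReal (α * H₀.card / m) := by
        rw [Finset.sum_const, nsmul_eq_mul, mul_one, ← ofReal_natCast,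
          ← ofReal_mul (by positivity), mul_div_right_comm]

theorem stmt14 {Ω : Type*} [MeasurableSpace Ω] (μ : Measure Ω) [IsProbabilityMeasure μ]
    (m : ℕ) (hm : 2 ≤ m) (α : ℝ) (hα : α ∈ Set.Ioo (0:ℝ) 1)
    (β : ℝ → ℝ) (hβ0 : ∀ u, 0 ≤ u → 0 ≤ β u) (hβmono : MonotoneOn β (Set.Ici 0))
    (hβint : IntegrableOn (fun u => β u / u ^ 2) (Set.Ioi 0))
    (hβ1 : ∫ u in Set.Ioi (0:ℝ), β u / u ^ 2 ≤ 1)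
    (p : Fin m → Ω → ℝ) (hmeas : ∀ i, Measurable (p i))
    (hval : ∀ i ω, p i ω ∈ Set.Icc (0:ℝ) 1)
    (H₀ : Finset (Fin m))
    (hnull : ∀ i ∈ H₀, ∀ u ∈ Set.Icc (0:ℝ) 1, (μ {ω | p i ω ≤ u}).toReal ≤ u) :
    ∫ ω, ((Finset.univ.filter
          (fun i => p i ω ≤ β (tbsu m α β (fun j => p j ω))) ∩ H₀).card : ℝ) /
        max ((Finset.univ.filter
          (fun i => p i ω ≤ β (tbsu m α β (fun j => p j ω)))).card : ℝ) 1 ∂μ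
      ≤ α * H₀.card / m :=
  stmt14_general μ m α hα β hβ0 hβmono hβint hβ1 p hmeas H₀ hnull
end

section
/- With νᵢ = (i·δ)⁻¹ where δ = 1 + 1/2 + … + 1/m, the function β(u) = Σ_{i : αi/m ≤ u} (αi/m)νᵢ satisfies β(αk/m) = δ⁻¹·αk/m for all k ∈ {1,…,m}, and ∫₀^∞ u⁻² β(u) du = 1 (recovering the Benjamini–Yekutieli correction). -/
/-!
Each grid point `aᵢ = αi/m` contributes the jump `aᵢνᵢ` to the step function `β`, and
`∫_{aᵢ}^∞ u⁻² du = 1/aᵢ`, so the integral equals `Σ νᵢ = δ⁻¹ Σ 1/i = 1`. At a grid point `αk/m`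
exactly the first `k` jumps have occurred, each equal to `α/(mδ)`.
-/

open MeasureTheory Set

lemma div_sq_eq_mul_rpow_neg_two (c : ℝ) {x : ℝ} (hx : 0 < x) : c / x ^ 2 = c * x ^ (-2 : ℝ) := by
  rw [Real.rpow_neg hx.le, show (2 : ℝ) = (2 : ℕ) by norm_num, Real.rpow_natCast, div_eq_mul_inv]

lemma integrableOn_Ioi_div_sq {a : ℝ} (ha : 0 < a) (c : ℝ) :
    IntegrableOn (fun u : ℝ => c / u ^ 2) (Ioi a) :=
  IntegrableOn.congr_fun ((integrableOn_Ioi_rpow_of_lt (a := -2) (by norm_num) ha).const_mul c)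
    (fun _ hu => (div_sq_eq_mul_rpow_neg_two c (ha.trans hu)).symm) measurableSet_Ioi

lemma integral_Ioi_div_sq {a : ℝ} (ha : 0 < a) (c : ℝ) : ∫ u in Ioi a, c / u ^ 2 = c / a := by
  calc ∫ u in Ioi a, c / u ^ 2
      = c * ∫ u in Ioi a, u ^ (-2 : ℝ) := by
        rw [← integral_const_mul]
        exact setIntegral_congr_fun measurableSet_Ioi
          fun u hu => div_sq_eq_mul_rpow_neg_two c (ha.trans hu)
    _ = c / a := by
        rw [integral_Ioi_rpow_of_lt (by norm_num) ha, show (-2 : ℝ) + 1 = -1 by norm_num,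
          Real.rpow_neg_one]
        field_simp

lemma integral_Ioi_zero_indicator_Ici_div_sq {a : ℝ} (ha : 0 < a) (c : ℝ) :
    ∫ u in Ioi 0, (Ici a).indicator (fun u => c / u ^ 2) u = c / a := by
  rw [setIntegral_indicator measurableSet_Ici, inter_eq_right.2 (Ici_subset_Ioi.2 ha),
    integral_Ici_eq_integral_Ioi, integral_Ioi_div_sq ha]

theorem integral_Ioi_sum_filter_le_div_sq {ι : Type*} (s : Finset ι) {a : ι → ℝ}
    (ha : ∀ i ∈ s, 0 < a i) (w : ι → ℝ) :
    ∫ u in Ioi 0, (∑ i ∈ s with a i ≤ u, w i) / u ^ 2 = ∑ i ∈ s, w i / a i := by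
  have hsplit : ∀ u, (∑ i ∈ s with a i ≤ u, w i) / u ^ 2 =
      ∑ i ∈ s, (Ici (a i)).indicator (fun u => w i / u ^ 2) u := by
    intro u
    rw [Finset.sum_filter, Finset.sum_div]
    refine Finset.sum_congr rfl fun i _ => ?_
    by_cases h : a i ≤ u <;> simp [h]
  simp only [hsplit]
  rw [integral_finsetSum]
  · exact Finset.sum_congr rfl fun i hi => integral_Ioi_zero_indicator_Ici_div_sq (ha i hi) (w i)
  · intro i hi
    have hIci : IntegrableOn (fun u : ℝ => w i / u ^ 2) (Ici (a i)) :=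
      (integrableOn_Ici_iff_integrableOn_Ioi).2 (integrableOn_Ioi_div_sq (ha i hi) (w i))
    exact (hIci.integrable_indicator measurableSet_Ici).integrableOn

lemma Finset.filter_Icc_le_apply_of_strictMono {γ : Type*} [LinearOrder γ] {f : ℕ → γ}
    (hf : StrictMono f) {l k m : ℕ} (hkm : k ≤ m) :
    (Finset.Icc l m).filter (fun i => f i ≤ f k) = Finset.Icc l k := by
  ext i
  simp only [Finset.mem_filter, Finset.mem_Icc, hf.le_iff_le]
  omega

theorem stmt16 (m : ℕ) (hm : 1 ≤ m) (α : ℝ) (hα : α ∈ Set.Ioo (0:ℝ) 1)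
    (δ : ℝ) (hδ : δ = ∑ j ∈ Finset.Icc 1 m, (1 : ℝ) / j)
    (β : ℝ → ℝ)
    (hβ : ∀ u : ℝ, β u =
      ∑ i ∈ (Finset.Icc 1 m).filter (fun i : ℕ => α * (i : ℝ) / m ≤ u),
        α * (i : ℝ) / m * (1 / ((i : ℝ) * δ))) :
    (∀ k, 1 ≤ k → k ≤ m → β (α * k / m) = δ⁻¹ * (α * k / m)) ∧
    ∫ u in Set.Ioi (0:ℝ), β u / u ^ 2 = 1 := by
  have hα0 : 0 < α := hα.1
  have hm0 : (0 : ℝ) < m := by exact_mod_cast hm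
  have hδ0 : 0 < δ := hδ ▸ Finset.sum_pos (fun j hj => by
    have : 0 < j := (Finset.mem_Icc.1 hj).1
    positivity) ⟨1, Finset.mem_Icc.2 ⟨le_rfl, hm⟩⟩
  have hgrid_pos : ∀ i ∈ Finset.Icc 1 m, 0 < α * (i : ℝ) / m := fun i hi => by
    have : 0 < i := (Finset.mem_Icc.1 hi).1
    positivity
  refine ⟨fun k _ hkm => ?_, ?_⟩
  · have hjump : ∀ i ∈ Finset.Icc 1 k, α * (i : ℝ) / m * (1 / ((i : ℝ) * δ)) = α / (m * δ) :=
      fun i hi => by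
        have : (i : ℝ) ≠ 0 := by exact_mod_cast (Nat.one_le_iff_ne_zero.1 (Finset.mem_Icc.1 hi).1)
        field_simp
    have hmono : StrictMono fun i : ℕ => α * (i : ℝ) / m := fun i j hij => by
      have : (i : ℝ) < j := by exact_mod_cast hij
      dsimp only
      gcongr
    rw [hβ, Finset.filter_Icc_le_apply_of_strictMono hmono hkm, Finset.sum_congr rfl hjump,
      Finset.sum_const, Nat.card_Icc, Nat.add_sub_cancel, nsmul_eq_mul]
    field_simp
  · simp only [hβ]
    rw [integral_Ioi_sum_filter_le_div_sq _ hgrid_pos,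
      Finset.sum_congr rfl fun i hi => mul_div_cancel_left₀ _ (hgrid_pos i hi).ne']
    simp only [← div_div]
    rw [← Finset.sum_div, ← hδ, div_self hδ0.ne']
end

section
/- Let H = {1,…,m}, k ≥ 1, and let {A_C}_{C ⊆ H} be non-decreasing in C. Define φ(C) = ⋃_{I ⊆ H, |I| = k−1} A_{C ∪ I}. Suppose H₀ ⊆ H satisfies |H₀ \ A_{H₀}| ≤ k−1 (i.e., there exists I₀ with |I₀| = k−1 and H₀ ⊆ A_{H₀} ∪ I₀). Then φ is non-decreasing, the recursion C₀ = H, C_{j+1} = φ(C_j) is decreasing and stabilizes at a fixed point Ĉ, and the final set satisfies |Ĉᶜ ∩ H₀| ≤ k−1. -/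
/-!
The step-down map `φ` is monotone because `A` is, so starting from the whole index set it produces
a decreasing sequence of finite sets, which must stabilise. For the error bound, fix one `I₀` of
size `k - 1` containing `H₀ \ A H₀`. If `H₀ ⊆ C ∪ I₀`, then monotonicity gives
`A H₀ ⊆ A (C ∪ I₀) ⊆ φ C`, hence `H₀ ⊆ φ C ∪ I₀`; so every set of the sequence misses at most the
`k - 1` elements of `I₀` from `H₀`.
-/

open Finset

namespace StepDown

variable {α : Type*} [DecidableEq α]

def step (A : Finset α → Finset α) (𝓘 : Finset (Finset α)) (C : Finset α) : Finset α :=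
  𝓘.sup fun I => A (C ∪ I)

variable {A : Finset α → Finset α} {𝓘 : Finset (Finset α)} {H₀ I : Finset α}

theorem monotone_step (hA : Monotone A) : Monotone (step A 𝓘) :=
  fun _ _ hC => sup_mono_fun fun _ _ => hA (union_subset_union hC subset_rfl)

theorem subset_step_union (hA : Monotone A) (hI : I ∈ 𝓘) (hH₀I : H₀ \ A H₀ ⊆ I)
    {C : Finset α} (hC : H₀ ⊆ C ∪ I) : H₀ ⊆ step A 𝓘 C ∪ I := by
  have hA_step : A H₀ ⊆ step A 𝓘 C :=
    (hA hC).trans (le_sup (f := fun I => A (C ∪ I)) hI)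
  intro x hx
  by_cases hxA : x ∈ A H₀
  · exact mem_union_left _ (hA_step hxA)
  · exact mem_union_right _ (hH₀I (mem_sdiff.2 ⟨hx, hxA⟩))

variable [Fintype α]

theorem subset_iterate_step_univ_union (hA : Monotone A) (hI : I ∈ 𝓘) (hH₀I : H₀ \ A H₀ ⊆ I)
    (j : ℕ) : H₀ ⊆ (step A 𝓘)^[j] univ ∪ I := by
  induction j with
  | zero => exact subset_union_left.trans' (subset_univ _)
  | succ j ih =>
    rw [Function.iterate_succ_apply']
    exact subset_step_union hA hI hH₀I ih

theorem card_compl_iterate_step_univ_inter_le (hA : Monotone A) {r : ℕ}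
    (hH₀ : #(H₀ \ A H₀) ≤ r) (j : ℕ) :
    #(((step A (powersetCard r univ))^[j] univ)ᶜ ∩ H₀) ≤ r := by
  by_cases hr : r ≤ Fintype.card α
  · obtain ⟨I₀, hH₀I₀, hI₀⟩ := exists_superset_card_eq hH₀ hr
    have hmem : I₀ ∈ powersetCard r univ := mem_powersetCard.2 ⟨subset_univ _, hI₀⟩
    have hcover := subset_iterate_step_univ_union hA hmem hH₀I₀ j
    calc #(((step A (powersetCard r univ))^[j] univ)ᶜ ∩ H₀)
        ≤ #I₀ := card_le_card fun x hx => by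
          simp only [mem_inter, mem_compl] at hx
          exact (mem_union.1 (hcover hx.2)).resolve_left hx.1
      _ = r := hI₀
  · exact (card_le_univ _).trans (not_le.1 hr).le

end StepDown

open StepDown in
theorem stmt18_general (m k : ℕ)
    (A : Finset (Fin m) → Finset (Fin m))
    (hA : ∀ C C', C ⊆ C' → A C ⊆ A C')
    (H₀ : Finset (Fin m)) (h0 : (H₀ \ A H₀).card ≤ k - 1)
    (φ : Finset (Fin m) → Finset (Fin m))
    (hφ : ∀ C, φ C = (Finset.powersetCard (k - 1) Finset.univ).sup (fun I => A (C ∪ I)))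
    (C : ℕ → Finset (Fin m)) (hC0 : C 0 = Finset.univ)
    (hCrec : ∀ j, C (j + 1) = φ (C j)) :
    (∀ C₁ C₂, C₁ ⊆ C₂ → φ C₁ ⊆ φ C₂) ∧
    (∀ j, C (j + 1) ⊆ C j) ∧
    (∃ j, ∀ j', j ≤ j' → C j' = C j) ∧
    ∀ j, (((C j)ᶜ : Finset (Fin m)) ∩ H₀).card ≤ k - 1 := by
  obtain rfl : φ = step A (powersetCard (k - 1) univ) := funext hφ
  obtain rfl : C = fun j => (step A (powersetCard (k - 1) univ))^[j] univ := funext fun j => by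
    induction j with
    | zero => exact hC0
    | succ j ih => rw [hCrec, ih, Function.iterate_succ_apply']
  have hmono := monotone_step (𝓘 := powersetCard (k - 1) univ) hA
  have hanti := hmono.antitone_iterate_of_map_le (subset_univ _)
  refine ⟨fun _ _ => (hmono ·), fun j => hanti j.le_succ, ?_,
    card_compl_iterate_step_univ_inter_le hA h0⟩
  obtain ⟨n, hn⟩ := WellFoundedLT.antitone_chain_condition hanti
  exact ⟨n, fun j hj => (hn j hj).symm⟩

theorem stmt18 (m k : ℕ) (hk : 1 ≤ k)
    (A : Finset (Fin m) → Finset (Fin m))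
    (hA : ∀ C C', C ⊆ C' → A C ⊆ A C')
    (H₀ : Finset (Fin m)) (h0 : (H₀ \ A H₀).card ≤ k - 1)
    (φ : Finset (Fin m) → Finset (Fin m))
    (hφ : ∀ C, φ C = (Finset.powersetCard (k - 1) Finset.univ).sup (fun I => A (C ∪ I)))
    (C : ℕ → Finset (Fin m)) (hC0 : C 0 = Finset.univ)
    (hCrec : ∀ j, C (j + 1) = φ (C j)) :
    (∀ C₁ C₂, C₁ ⊆ C₂ → φ C₁ ⊆ φ C₂) ∧
    (∀ j, C (j + 1) ⊆ C j) ∧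
    (∃ j, ∀ j', j ≤ j' → C j' = C j) ∧
    ∀ j, (((C j)ᶜ : Finset (Fin m)) ∩ H₀).card ≤ k - 1 :=
  stmt18_general m k A hA H₀ h0 φ hφ C hC0 hCrec
end
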